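/- arXiv:1910.02177 — 7 statements merged into one kernel-verified Lean document; each statement's English description precedes it below -/
import Mathlib

section
/- Let m = ({ρ_i}_{i∈I}, {𝓜_j}_{j∈J}, {E_k}_{k∈K}) be a physical representation with finite index types I, J, K that is not trivial. If the physical model [m] is unique, then Π_{i∈I} det(ρ_i) · Π_{j∈J} det(C_j) = 0, where C_j is the Choi matrix of 𝓜_j; i.e., at least one initial state or one Choi matrix is singular. -/
/-!
Suppose every `ρ_i` and every Choi matrix `C_j` is nonsingular, hence positive definite. For the
depolarizing map `𝓣 A = r A + (1 - r) (Tr A / d) 1`, which is self-dual with inverse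
`A ↦ r⁻¹ A + (1 - r⁻¹) (Tr A / d) 1`, the model `𝓣(m)` is distribution-equivalent to `m`.
For `r < 1` close to `1` it is still physical: the states `𝓣⁻¹ ρ_i` are small perturbations of
`ρ_i`, and the Choi matrix of `𝓣⁻¹ ∘ 𝓜_j ∘ 𝓣` is `C_j - γ 1 + γ (1 ⊗ 𝓜_j 1)` with
`γ = (1 - r) / (r d)`. Uniqueness gives `𝓢 ∈ 𝕊` with `𝓣(m) = 𝓢(m)`, and `𝓢` preserves the
purity `Tr A²`. But `Tr (𝓣 A)² - Tr A² = (r² - 1) Tr (A - (Tr A / d) 1)²`, so comparing the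
purities of `ρ_i`, `𝓜_j 1` and `E_k` with those of their images shows that all of them are
multiples of `1`: `m` is trivial.
-/

open Matrix
open scoped ComplexOrder

noncomputable section

/-- d×d complex matrices. -/
abbrev Mat (d : ℕ) := Matrix (Fin d) (Fin d) ℂ

/-- The Choi matrix `Σ_{a,b} |a⟩⟨b| ⊗ 𝓜(|a⟩⟨b|)` of a linear map on matrices. -/
def choi {d : ℕ} (M : Mat d →ₗ[ℂ] Mat d) : Matrix (Fin d × Fin d) (Fin d × Fin d) ℂ :=
  ∑ a : Fin d, ∑ b : Fin d,
    kroneckerMap (· * ·) (single a b (1 : ℂ)) (M (single a b (1 : ℂ)))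

/-- A representation: families of initial states, evolution maps and measurement
operators. -/
structure QRep (d : ℕ) (I J K : Type) where
  ρ : I → Mat d
  M : J → Mat d →ₗ[ℂ] Mat d
  E : K → Mat d

/-- A representation is physical if the states are positive semidefinite Hermitian with
trace one, the maps are completely positive (positive semidefinite Choi matrix) and
trace-preserving, and the measurement operators `E` are Hermitian with `0 ≤ E ≤ 1`. -/
def QRep.Physical {d : ℕ} {I J K : Type} (m : QRep d I J K) : Prop :=
  (∀ i, (m.ρ i).PosSemidef ∧ (m.ρ i).trace = 1) ∧
  (∀ j, (choi (m.M j)).PosSemidef ∧ ∀ A, (m.M j A).trace = A.trace) ∧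
  (∀ k, (m.E k).PosSemidef ∧ ((1 : Mat d) - m.E k).PosSemidef)

/-- The probability `p_m(i, j_1, …, j_N, k) = Tr[E_k 𝓜_{j_N}(⋯𝓜_{j_1}(ρ_i)⋯)]`. -/
def QRep.prob {d : ℕ} {I J K : Type} (m : QRep d I J K) (i : I) (js : List J) (k : K) : ℂ :=
  (m.E k * js.foldl (fun A j => m.M j A) (m.ρ i)).trace

/-- Two representations are distribution-equivalent if their probability distributions
coincide. -/
def DistEquiv {d : ℕ} {I J K : Type} (m m' : QRep d I J K) : Prop :=
  ∀ (i : I) (js : List J) (k : K), m.prob i js k = m'.prob i js k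

/-- The unitary (`anti = false`) or antiunitary (`anti = true`) transformation
`𝓢(A) = uAu†` resp. `𝓢(A) = uAᵀu†` associated with a unitary matrix `u`. -/
def Sfwd {d : ℕ} (u : Mat d) (anti : Bool) (A : Mat d) : Mat d :=
  if anti then u * Aᵀ * uᴴ else u * A * uᴴ

/-- The inverse of `Sfwd u anti`; for `𝓢 ∈ 𝕊` the dual map `𝓢*` for the trace pairing
coincides with `𝓢⁻¹`. -/
def Sinv {d : ℕ} (u : Mat d) (anti : Bool) (A : Mat d) : Mat d :=
  if anti then (uᴴ * A * u)ᵀ else uᴴ * A * u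

/-- `m' = 𝓢(m) = ({𝓢⁻¹(ρ_i)}, {𝓢⁻¹∘𝓜_j∘𝓢}, {𝓢*(E_k)})` for some unitary or
antiunitary transformation `𝓢 ∈ 𝕊`. -/
def RelatedByS {d : ℕ} {I J K : Type} (m m' : QRep d I J K) : Prop :=
  ∃ u ∈ Matrix.unitaryGroup (Fin d) ℂ, ∃ anti : Bool,
    (∀ i, m'.ρ i = Sinv u anti (m.ρ i)) ∧
    (∀ j A, m'.M j A = Sinv u anti (m.M j (Sfwd u anti A))) ∧
    (∀ k, m'.E k = Sinv u anti (m.E k))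

/-- A representation is trivial if all states are maximally mixed, all maps are unital
and all measurement operators are scalar multiples of the identity. -/
def QRep.Trivial {d : ℕ} {I J K : Type} (m : QRep d I J K) : Prop :=
  (∀ i, m.ρ i = ((d : ℂ))⁻¹ • (1 : Mat d)) ∧
  (∀ j, m.M j 1 = 1) ∧
  (∀ k, ∃ c : ℂ, m.E k = c • (1 : Mat d))

open Filter Topology
open scoped Kronecker

namespace Matrix

variable {n : Type*} [Fintype n] [DecidableEq n]

def depolarize (t : ℂ) : Matrix n n ℂ →ₗ[ℂ] Matrix n n ℂ :=
  t • LinearMap.id + ((1 - t) / Fintype.card n) • (traceLinearMap n ℂ ℂ).smulRight 1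

lemma depolarize_apply (t : ℂ) (A : Matrix n n ℂ) :
    depolarize t A = t • A + ((1 - t) / Fintype.card n * A.trace) • 1 := by
  simp [depolarize, mul_comm, smul_smul]

lemma trace_depolarize_mul (t : ℂ) (A B : Matrix n n ℂ) :
    (depolarize t A * B).trace = (A * depolarize t B).trace := by
  simp only [depolarize_apply, add_mul, mul_add, smul_mul_assoc, mul_smul_comm, one_mul,
    mul_one, trace_add, trace_smul, smul_eq_mul]
  ring

lemma PosSemidef.depolarize {A : Matrix n n ℂ} (hA : A.PosSemidef) {r : ℝ} (h0 : 0 ≤ r)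
    (h1 : r ≤ 1) : (depolarize (r : ℂ) A).PosSemidef := by
  rw [depolarize_apply]
  have hcoeff : (0 : ℂ) ≤ (1 - r) / Fintype.card n := by
    rw [← Complex.ofReal_one, ← Complex.ofReal_sub, ← Complex.ofReal_natCast, ← Complex.ofReal_div]
    exact Complex.zero_le_real.2 (div_nonneg (by linarith) (Nat.cast_nonneg _))
  exact (hA.smul (Complex.zero_le_real.2 h0)).add
    (PosSemidef.one.smul (mul_nonneg hcoeff hA.trace_nonneg))

variable [Nonempty n]

@[simp]
lemma trace_depolarize (t : ℂ) (A : Matrix n n ℂ) : (depolarize t A).trace = A.trace := by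
  have : (Fintype.card n : ℂ) ≠ 0 := Nat.cast_ne_zero.2 Fintype.card_ne_zero
  rw [depolarize_apply]
  simp only [trace_add, trace_smul, trace_one, smul_eq_mul]
  field_simp
  ring

@[simp]
lemma depolarize_apply_one (t : ℂ) : depolarize t (1 : Matrix n n ℂ) = 1 := by
  have : (Fintype.card n : ℂ) ≠ 0 := Nat.cast_ne_zero.2 Fintype.card_ne_zero
  rw [depolarize_apply, trace_one, ← add_smul, div_mul_cancel₀ _ this, add_sub_cancel, one_smul]

lemma depolarize_depolarize (s t : ℂ) (A : Matrix n n ℂ) :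
    depolarize s (depolarize t A) = depolarize (s * t) A := by
  rw [depolarize_apply s, trace_depolarize, depolarize_apply, depolarize_apply, smul_add,
    smul_smul, smul_smul, add_assoc, ← add_smul]
  congr 2
  ring

lemma depolarize_depolarize_inv {t : ℂ} (ht : t ≠ 0) (A : Matrix n n ℂ) :
    depolarize t (depolarize t⁻¹ A) = A := by
  rw [depolarize_depolarize, mul_inv_cancel₀ ht, depolarize_apply]
  simp

lemma trace_depolarize_mul_self (t : ℂ) (A : Matrix n n ℂ) :
    (depolarize t A * depolarize t A).trace =
      t ^ 2 * (A * A).trace + (1 - t ^ 2) * A.trace ^ 2 / Fintype.card n := by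
  have : (Fintype.card n : ℂ) ≠ 0 := Nat.cast_ne_zero.2 Fintype.card_ne_zero
  simp only [depolarize_apply, add_mul, mul_add, smul_mul_assoc, mul_smul_comm, one_mul,
    mul_one, trace_add, trace_smul, trace_one, smul_eq_mul]
  field_simp
  ring

lemma eq_smul_one_of_trace_depolarize_mul_self {t : ℂ} (ht : t ^ 2 ≠ 1)
    {A : Matrix n n ℂ} (hA : A.IsHermitian)
    (h : (depolarize t A * depolarize t A).trace = (A * A).trace) :
    A = (A.trace / Fintype.card n) • 1 := by
  have hc : (Fintype.card n : ℂ) ≠ 0 := Nat.cast_ne_zero.2 Fintype.card_ne_zero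
  set B := A - (A.trace / Fintype.card n) • 1
  have hBH : Bᴴ = B := by
    simp [B, hA.eq, ← trace_conjTranspose]
  have hBB : (B * B).trace = (A * A).trace - A.trace ^ 2 / Fintype.card n := by
    simp only [B, sub_mul, mul_sub, smul_mul_assoc, mul_smul_comm, one_mul, mul_one,
      trace_sub, trace_smul, trace_one, smul_eq_mul]
    field_simp
    ring
  rw [trace_depolarize_mul_self] at h
  have hsq : (t ^ 2 - 1) * (B * B).trace = 0 := by
    rw [hBB]
    linear_combination h
  rw [← sub_eq_zero, ← trace_conjTranspose_mul_self_eq_zero_iff, hBH]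
  exact (mul_eq_zero.1 hsq).resolve_left (sub_ne_zero.2 ht)

lemma depolarize_inv_comp_comp_depolarize {t : ℂ} (ht : t ≠ 0)
    {M : Matrix n n ℂ →ₗ[ℂ] Matrix n n ℂ} (hM : ∀ A, (M A).trace = A.trace) :
    depolarize t⁻¹ ∘ₗ M ∘ₗ depolarize t =
      M + ((1 - t) / (t * Fintype.card n)) • (traceLinearMap n ℂ ℂ).smulRight (M 1 - 1) := by
  have hc : (Fintype.card n : ℂ) ≠ 0 := Nat.cast_ne_zero.2 Fintype.card_ne_zero
  ext1 A
  simp only [LinearMap.comp_apply, LinearMap.add_apply, LinearMap.smul_apply,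
    LinearMap.smulRight_apply, traceLinearMap_apply]
  rw [depolarize_apply t⁻¹, hM, trace_depolarize, depolarize_apply t, map_add, map_smul,
    map_smul]
  match_scalars <;> field_simp
  ring

open scoped MatrixOrder in
lemma PosDef.eventually_posSemidef_sub_smul_one {A : Matrix n n ℂ} (hA : A.PosDef) :
    ∀ᶠ s : ℝ in 𝓝 0, (A - (s : ℂ) • 1).PosSemidef := by
  obtain ⟨δ, hδ, hδA⟩ := (CFC.exists_pos_algebraMap_le_iff hA.isHermitian.isSelfAdjoint).2
    fun x hx => hA.isStrictlyPositive.spectrum_pos hx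
  filter_upwards [gt_mem_nhds hδ] with s hs
  have hsplit : A - (s : ℂ) • 1 = (A - algebraMap ℝ _ δ) + ((δ - s : ℝ) : ℂ) • 1 := by
    rw [Algebra.algebraMap_eq_smul_one, ← Complex.coe_smul]
    push_cast
    module
  rw [hsplit]
  exact (le_iff.1 hδA).add (PosSemidef.one.smul (Complex.zero_le_real.2 (by linarith)))

lemma PosDef.eventually_posSemidef_depolarize_inv {A : Matrix n n ℂ} (hA : A.PosDef)
    (hA1 : A.trace = 1) : ∀ᶠ r : ℝ in 𝓝 1, (depolarize (r : ℂ)⁻¹ A).PosSemidef := by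
  have hlim : Tendsto (fun r : ℝ => (1 - r) / Fintype.card n) (𝓝 1) (𝓝 0) :=
    ((continuous_const.sub continuous_id).div_const _).tendsto' 1 0 (by simp)
  filter_upwards [hlim.eventually hA.eventually_posSemidef_sub_smul_one, lt_mem_nhds one_pos]
    with r hr hr0
  have hsplit : depolarize (r : ℂ)⁻¹ A =
      ((r⁻¹ : ℝ) : ℂ) • (A - (((1 - r) / Fintype.card n : ℝ) : ℂ) • 1) := by
    rw [depolarize_apply, hA1, smul_sub, smul_smul, sub_eq_add_neg (_ • A), ← neg_smul,
      Complex.ofReal_inv]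
    congr 2
    have hr0' : (r : ℂ) ≠ 0 := by exact_mod_cast hr0.ne'
    push_cast
    field_simp
    ring
  rw [hsplit]
  exact hr.smul (Complex.zero_le_real.2 (inv_nonneg.2 hr0.le))

end Matrix

lemma choi_apply {d : ℕ} (M : Mat d →ₗ[ℂ] Mat d) (p q p' q' : Fin d) :
    choi M (p, q) (p', q') = M (single p p' 1) q q' := by
  simp only [choi, Matrix.sum_apply, kroneckerMap_apply, single_apply]
  rw [Finset.sum_eq_single p, Finset.sum_eq_single p'] <;> simp +contextual

lemma Matrix.PosSemidef.map_one_of_choi {d : ℕ} {M : Mat d →ₗ[ℂ] Mat d}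
    (h : (choi M).PosSemidef) : (M 1).PosSemidef := by
  have hblock : ∀ p, M (single p p 1) = (choi M).submatrix (p, ·) (p, ·) := fun p => by
    ext q q'
    rw [submatrix_apply, choi_apply]
  rw [← sum_single_one, map_sum]
  exact posSemidef_sum _ fun p _ => hblock p ▸ h.submatrix _

lemma choi_add_smul_traceLinearMap_smulRight_sub_one {d : ℕ} (M : Mat d →ₗ[ℂ] Mat d) (γ : ℂ)
    (G : Mat d) :
    choi (M + γ • (traceLinearMap (Fin d) ℂ ℂ).smulRight (G - 1)) =
      choi M - γ • 1 + γ • ((1 : Mat d) ⊗ₖ G) := by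
  ext ⟨p, q⟩ ⟨p', q'⟩
  simp only [choi_apply, LinearMap.add_apply, LinearMap.smul_apply, LinearMap.smulRight_apply,
    traceLinearMap_apply, Matrix.add_apply, Matrix.sub_apply, Matrix.smul_apply,
    kronecker_apply, one_apply, Prod.mk.injEq, smul_eq_mul]
  by_cases hp : p = p'
  · subst hp
    simp only [trace_single_eq_same, true_and, if_true]
    ring
  · simp [trace_single_eq_of_ne _ _ _ hp, hp]

lemma Matrix.PosDef.eventually_posSemidef_choi_conj_depolarize {d : ℕ} [NeZero d]
    {M : Mat d →ₗ[ℂ] Mat d} (hC : (choi M).PosDef) (hM : ∀ A, (M A).trace = A.trace) :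
    ∀ᶠ r : ℝ in 𝓝[<] 1,
      (choi (depolarize (r : ℂ)⁻¹ ∘ₗ M ∘ₗ depolarize (r : ℂ))).PosSemidef := by
  have hlim : Tendsto (fun r : ℝ => (1 - r) / (r * d)) (𝓝 1) (𝓝 0) := by
    have hcont : ContinuousAt (fun r : ℝ => (1 - r) / (r * d)) 1 :=
      (continuousAt_const.sub continuousAt_id).div (continuousAt_id.mul continuousAt_const)
        (by simp [NeZero.ne d])
    simpa using hcont.tendsto
  filter_upwards [nhdsWithin_le_nhds (hlim.eventually hC.eventually_posSemidef_sub_smul_one),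
    Ioo_mem_nhdsLT one_pos] with r hr ⟨hr0, hr1⟩
  have hγ : (1 - (r : ℂ)) / (r * Fintype.card (Fin d)) = (((1 - r) / (r * d) : ℝ) : ℂ) := by
    rw [Fintype.card_fin]
    push_cast
    ring
  rw [depolarize_inv_comp_comp_depolarize (by exact_mod_cast hr0.ne') hM,
    choi_add_smul_traceLinearMap_smulRight_sub_one, hγ]
  exact hr.add ((PosSemidef.one.kronecker hC.posSemidef.map_one_of_choi).smul
    (Complex.zero_le_real.2 (div_nonneg (by linarith) (by positivity))))

section UnitaryTransformation

variable {d : ℕ} {u : Mat d}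

lemma Sfwd_one (hu : u ∈ unitaryGroup (Fin d) ℂ) (anti : Bool) : Sfwd u anti 1 = 1 := by
  have huu : u * uᴴ = 1 := mem_unitaryGroup_iff.1 hu
  cases anti <;> simp [Sfwd, huu]

lemma trace_Sinv_mul_self (hu : u ∈ unitaryGroup (Fin d) ℂ) (anti : Bool) (A : Mat d) :
    (Sinv u anti A * Sinv u anti A).trace = (A * A).trace := by
  have huu : u * uᴴ = 1 := mem_unitaryGroup_iff.1 hu
  have hconj : (uᴴ * A * u * (uᴴ * A * u)).trace = (A * A).trace :=
    calc (uᴴ * A * u * (uᴴ * A * u)).trace = (uᴴ * (A * (u * uᴴ) * A) * u).trace := by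
          simp only [Matrix.mul_assoc]
      _ = (A * A).trace := by rw [huu, Matrix.mul_one, trace_mul_cycle, huu, Matrix.one_mul]
  cases anti
  · exact hconj
  · rw [Sinv, if_pos rfl, ← transpose_mul, trace_transpose, hconj]

lemma RelatedByS.trace_mul_self_eq {I J K : Type} {m m' : QRep d I J K} (h : RelatedByS m m') :
    (∀ i, (m'.ρ i * m'.ρ i).trace = (m.ρ i * m.ρ i).trace) ∧
    (∀ j, (m'.M j 1 * m'.M j 1).trace = (m.M j 1 * m.M j 1).trace) ∧
    (∀ k, (m'.E k * m'.E k).trace = (m.E k * m.E k).trace) := by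
  obtain ⟨u, hu, anti, hρ, hM, hE⟩ := h
  refine ⟨fun i => ?_, fun j => ?_, fun k => ?_⟩
  · rw [hρ, trace_Sinv_mul_self hu]
  · rw [hM, Sfwd_one hu, trace_Sinv_mul_self hu]
  · rw [hE, trace_Sinv_mul_self hu]

end UnitaryTransformation

namespace QRep

variable {d : ℕ} {I J K : Type}

/-- The model `𝓣(m)` of the paper for `𝓣 = depolarize t`; here `𝓣* = 𝓣`. -/
def depolarized (m : QRep d I J K) (t : ℂ) : QRep d I J K where
  ρ i := depolarize t⁻¹ (m.ρ i)
  M j := depolarize t⁻¹ ∘ₗ m.M j ∘ₗ depolarize t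
  E k := depolarize t (m.E k)

variable [NeZero d]

lemma distEquiv_depolarized (m : QRep d I J K) {t : ℂ} (ht : t ≠ 0) :
    DistEquiv m (m.depolarized t) := by
  have hfold : ∀ (js : List J) (A : Mat d),
      js.foldl (fun A j => (m.depolarized t).M j A) (depolarize t⁻¹ A) =
        depolarize t⁻¹ (js.foldl (fun A j => m.M j A) A) := by
    intro js
    induction js with
    | nil => intro A; rfl
    | cons j js ih =>
      intro A
      simp only [List.foldl_cons, ← ih]
      simp [depolarized, depolarize_depolarize_inv ht]
  intro i js k
  change _ = (depolarize t (m.E k) * js.foldl _ (depolarize t⁻¹ (m.ρ i))).trace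
  rw [hfold, trace_depolarize_mul, depolarize_depolarize_inv ht, prob]

lemma eventually_physical_depolarized [Finite I] [Finite J] {m : QRep d I J K}
    (hm : m.Physical) (hρ : ∀ i, (m.ρ i).PosDef) (hC : ∀ j, (choi (m.M j)).PosDef) :
    ∀ᶠ r : ℝ in 𝓝[<] 1, (m.depolarized r).Physical := by
  obtain ⟨hstate, hmap, heffect⟩ := hm
  have hρ' : ∀ᶠ r : ℝ in 𝓝[<] 1, ∀ i, ((m.depolarized r).ρ i).PosSemidef :=
    eventually_all.2 fun i =>
      nhdsWithin_le_nhds ((hρ i).eventually_posSemidef_depolarize_inv (hstate i).2)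
  have hC' : ∀ᶠ r : ℝ in 𝓝[<] 1, ∀ j, (choi ((m.depolarized r).M j)).PosSemidef :=
    eventually_all.2 fun j => (hC j).eventually_posSemidef_choi_conj_depolarize (hmap j).2
  filter_upwards [hρ', hC', Ioo_mem_nhdsLT one_pos] with r hρr hCr ⟨hr0, hr1⟩
  refine ⟨fun i => ⟨hρr i, ?_⟩, fun j => ⟨hCr j, fun A => ?_⟩, fun k => ⟨?_, ?_⟩⟩
  · simp [depolarized, (hstate i).2]
  · simp [depolarized, (hmap j).2]
  · exact (heffect k).1.depolarize hr0.le hr1.le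
  · simpa [depolarized] using (heffect k).2.depolarize hr0.le hr1.le

lemma trivial_of_relatedByS_depolarized {m : QRep d I J K} (hm : m.Physical) {t : ℂ}
    (ht : t ^ 2 ≠ 1) (h : RelatedByS m (m.depolarized t)) : m.Trivial := by
  obtain ⟨hstate, hmap, heffect⟩ := hm
  obtain ⟨hρ, hM, hE⟩ := h.trace_mul_self_eq
  have ht' : t⁻¹ ^ 2 ≠ 1 := by rwa [inv_pow, inv_ne_one]
  refine ⟨fun i => ?_, fun j => ?_, fun k =>
    ⟨_, eq_smul_one_of_trace_depolarize_mul_self ht (heffect k).1.isHermitian (hE k)⟩⟩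
  · rw [eq_smul_one_of_trace_depolarize_mul_self ht' (hstate i).1.isHermitian (hρ i),
      (hstate i).2, Fintype.card_fin, one_div]
  · have hM1 := hM j
    simp only [depolarized, LinearMap.comp_apply, depolarize_apply_one] at hM1
    rw [eq_smul_one_of_trace_depolarize_mul_self ht' (hmap j).1.map_one_of_choi.isHermitian hM1,
      (hmap j).2, trace_one, div_self (Nat.cast_ne_zero.2 Fintype.card_ne_zero), one_smul]

end QRep

theorem necessary_condition_of_uniqueness_general {d : ℕ} (hd : 2 ≤ d) {I J K : Type}
    [Fintype I] [Fintype J]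
    (m : QRep d I J K) (hphys : m.Physical) (hnontriv : ¬ m.Trivial)
    (huniq : ∀ m' : QRep d I J K, m'.Physical → DistEquiv m m' → RelatedByS m m') :
    (∏ i, (m.ρ i).det) * (∏ j, (choi (m.M j)).det) = 0 := by
  by_contra hdet
  have : NeZero d := ⟨by omega⟩
  obtain ⟨hρdet, hCdet⟩ := mul_ne_zero_iff.1 hdet
  have hρ : ∀ i, (m.ρ i).PosDef := fun i => (hphys.1 i).1.posDef_iff_det_ne_zero.2
    (Finset.prod_ne_zero_iff.1 hρdet i (Finset.mem_univ i))
  have hC : ∀ j, (choi (m.M j)).PosDef := fun j => (hphys.2.1 j).1.posDef_iff_det_ne_zero.2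
    (Finset.prod_ne_zero_iff.1 hCdet j (Finset.mem_univ j))
  obtain ⟨r, hphys', hr0, hr1⟩ :=
    ((m.eventually_physical_depolarized hphys hρ hC).and (Ioo_mem_nhdsLT one_pos)).exists
  have hr : (r : ℂ) ^ 2 ≠ 1 := by exact_mod_cast (pow_lt_one₀ hr0.le hr1 two_ne_zero).ne
  exact hnontriv (m.trivial_of_relatedByS_depolarized hphys hr
    (huniq _ hphys' (m.distEquiv_depolarized (by exact_mod_cast hr0.ne'))))

/-- Theorem 1, necessary condition of uniqueness: if a nontrivial
physical representation has a unique model, then at least one initial state or one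
Choi matrix is singular. -/
theorem necessary_condition_of_uniqueness {d : ℕ} (hd : 2 ≤ d) {I J K : Type}
    [Fintype I] [Fintype J] [Fintype K]
    (m : QRep d I J K) (hphys : m.Physical) (hnontriv : ¬ m.Trivial)
    (huniq : ∀ m' : QRep d I J K, m'.Physical → DistEquiv m m' → RelatedByS m m') :
    (∏ i, (m.ρ i).det) * (∏ j, (choi (m.M j)).det) = 0 :=
  necessary_condition_of_uniqueness_general hd m hphys hnontriv huniq
end
end

section
/- The set of super-non-degenerate unitary d×d matrices is dense in the unitary group U(d): for every unitary matrix u and every ε > 0 there exists a super-non-degenerate unitary matrix u' with ‖u' − u‖ < ε. -/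
open Matrix

noncomputable section

attribute [local instance] Matrix.frobeniusNormedAddCommGroup

/-- The super-non-degeneracy condition on a family of eigenphases `θ`: for all indices
`c ≠ d'`, `e ≠ f`, `c ≠ f`, `d' ≠ e`, the product `e^{i(θ_c−θ_{d'})}·e^{i(θ_e−θ_f)}`
is not of the form `e^{i(θ_a−θ_b)}`. -/
def SuperNonDegPhases {d : ℕ} (θ : Fin d → ℝ) : Prop :=
  ∀ c d' e f : Fin d, c ≠ d' → e ≠ f → c ≠ f → d' ≠ e →
    ∀ a b : Fin d,
      Complex.exp (((θ c - θ d' : ℝ) : ℂ) * Complex.I) *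
          Complex.exp (((θ e - θ f : ℝ) : ℂ) * Complex.I) ≠
        Complex.exp (((θ a - θ b : ℝ) : ℂ) * Complex.I)

/-- A unitary matrix is super-non-degenerate if its eigenvalues, listed with
multiplicity as `e^{iθ_a}`, satisfy the super-non-degeneracy condition. -/
def IsSuperNonDeg {d : ℕ} (u : Matrix (Fin d) (Fin d) ℂ) : Prop :=
  ∃ θ : Fin d → ℝ, ∃ v ∈ Matrix.unitaryGroup (Fin d) ℂ,
    u = v * Matrix.diagonal (fun a => Complex.exp (((θ a : ℝ) : ℂ) * Complex.I)) * vᴴ ∧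
    SuperNonDegPhases θ

/-! A unitary matrix `u` is `exp (I • a)` for the Hermitian matrix `a = arg u` given by the
functional calculus (every function is continuous on the finite spectrum of a matrix), so
diagonalising `a` writes `u = v * diagonal (exp (θ · * I)) * vᴴ`. The phase vectors
violating super-non-degeneracy lie on the countably many affine hyperplanes
`θ c - θ d' + θ e - θ f - θ a + θ b = 2πk`, each proper thanks to the index conditions, so
they form a Lebesgue-null set and the admissible phases are dense. Moving `θ` with the frame
`v` fixed moves the matrix continuously. -/

open Complex MeasureTheory

theorem exp_I_smul_cfc_arg {A : Type*} [CStarAlgebra A] {u : A} (hu : u ∈ unitary A)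
    (harg : ContinuousOn arg (spectrum ℂ u)) :
    NormedSpace.exp (I • cfc (ofReal ∘ arg : ℂ → ℂ) u) = u := by
  have := (IsSelfAdjoint.cfc_arg u).isStarNormal
  have : IsStarNormal (I • cfc (ofReal ∘ arg : ℂ → ℂ) u) := IsStarNormal.smul I _
  rw [← CFC.exp_eq_normedSpace_exp (𝕜 := ℂ), ← cfc_comp_smul .., ← cfc_comp' ..]
  conv_rhs => rw [← cfc_id' ℂ u]
  refine cfc_congr fun z hz ↦ ?_
  calc NormedSpace.exp (I • (ofReal ∘ arg) z) = exp (arg z * I) := by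
        rw [Function.comp_apply, smul_eq_mul, ← exp_eq_exp_ℂ, mul_comm]
    _ = z := by simpa [spectrum.norm_eq_one_of_unitary hu hz] using norm_mul_exp_arg_mul_I z

section UnitaryDiagonalization

open scoped Matrix.Norms.L2Operator

variable {n : Type*} [Fintype n] [DecidableEq n]

theorem Matrix.IsHermitian.exp_I_smul {a : Matrix n n ℂ} (ha : a.IsHermitian) :
    NormedSpace.exp (I • a) = (ha.eigenvectorUnitary : Matrix n n ℂ) *
      diagonal (fun i => Complex.exp ((ha.eigenvalues i : ℂ) * I)) *
        (ha.eigenvectorUnitary : Matrix n n ℂ)ᴴ := by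
  set V : Matrix n n ℂ := ↑ha.eigenvectorUnitary
  have hVinv : V⁻¹ = Vᴴ :=
    inv_eq_left_inv (Unitary.star_mul_self_of_mem ha.eigenvectorUnitary.2)
  have hconj : I • a = V * diagonal (fun i => I * (ha.eigenvalues i : ℂ)) * V⁻¹ := by
    conv_lhs => rw [ha.spectral_theorem]
    rw [Unitary.conjStarAlgAut_apply, hVinv,
      show (fun i => I * (ha.eigenvalues i : ℂ)) = I • (RCLike.ofReal ∘ ha.eigenvalues)
        from rfl,
      diagonal_smul, mul_smul_comm, smul_mul_assoc]
    rfl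
  rw [hconj, exp_conj V _ Unitary.isUnit_coe, exp_diagonal, Pi.exp_def, hVinv]
  simp only [← exp_eq_exp_ℂ, mul_comm I]

theorem Matrix.exists_eq_mul_diagonal_exp_mul_conjTranspose {u : Matrix n n ℂ}
    (hu : u ∈ unitaryGroup n ℂ) :
    ∃ θ : n → ℝ, ∃ v ∈ unitaryGroup n ℂ, u = v * diagonal (fun a => exp (θ a * I)) * vᴴ := by
  have ha : (cfc (ofReal ∘ arg : ℂ → ℂ) u).IsHermitian := IsSelfAdjoint.cfc_arg u
  refine ⟨ha.eigenvalues, ha.eigenvectorUnitary, ha.eigenvectorUnitary.2, ?_⟩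
  rw [← Matrix.IsHermitian.exp_I_smul ha,
    exp_I_smul_cfc_arg hu ((finite_spectrum u).continuousOn _)]

end UnitaryDiagonalization

theorem Matrix.diagonal_exp_mem_unitaryGroup {n : Type*} [Fintype n] [DecidableEq n]
    (θ : n → ℝ) : diagonal (fun a => exp (θ a * I)) ∈ unitaryGroup n ℂ := by
  rw [mem_unitaryGroup_iff, star_eq_conjTranspose, diagonal_conjTranspose, diagonal_mul_diagonal,
    ← diagonal_one]
  congr 1
  funext a
  rw [Pi.star_apply, RCLike.star_def, mul_conj, normSq_eq_norm_sq, norm_exp_ofReal_mul_I]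
  norm_num

section LevelSets

variable {E : Type*} [NormedAddCommGroup E] [NormedSpace ℝ E] [MeasurableSpace E] [BorelSpace E]
  [FiniteDimensional ℝ E] (μ : Measure E) [μ.IsAddHaarMeasure] {l : E →ₗ[ℝ] ℝ}

theorem addHaar_preimage_singleton_linearMap (hl : l ≠ 0) (r : ℝ) : μ (l ⁻¹' {r}) = 0 := by
  rcases (l ⁻¹' {r}).eq_empty_or_nonempty with h | ⟨x₀, hx₀⟩
  · rw [h, measure_empty]
  have hker : l ⁻¹' {r} = (· + -x₀) ⁻¹' (LinearMap.ker l) := by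
    ext x
    simp_all [sub_eq_zero, ← sub_eq_add_neg]
  rw [hker, measure_preimage_add_right]
  exact Measure.addHaar_submodule μ _ (by rwa [Ne, LinearMap.ker_eq_top])

theorem addHaar_preimage_linearMap_of_countable (hl : l ≠ 0) {S : Set ℝ} (hS : S.Countable) :
    μ (l ⁻¹' S) = 0 := by
  rw [← S.biUnion_of_singleton, Set.preimage_iUnion₂]
  exact (measure_biUnion_null_iff hS).2 fun r _ ↦ addHaar_preimage_singleton_linearMap μ hl r

end LevelSets

section Phases

variable {ι : Type*}

def phaseCombination (c d' e f a b : ι) : (ι → ℝ) →ₗ[ℝ] ℝ :=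
  let p : ι → (ι → ℝ) →ₗ[ℝ] ℝ := LinearMap.proj
  p c - p d' + p e - p f - p a + p b

theorem phaseCombination_apply (c d' e f a b : ι) (θ : ι → ℝ) :
    phaseCombination c d' e f a b θ = θ c - θ d' + θ e - θ f - θ a + θ b := rfl

theorem phaseCombination_ne_zero [DecidableEq ι] {c d' e f : ι} (a b : ι) (hcd : c ≠ d')
    (hef : e ≠ f) (hcf : c ≠ f) (hde : d' ≠ e) : phaseCombination c d' e f a b ≠ 0 := by
  intro h
  -- the coefficient of `θ c`, or of `θ e` when `a = c`, is `1` or `2`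
  have := LinearMap.congr_fun h (Pi.single (if a = c then e else c) 1)
  simp only [phaseCombination_apply, Pi.single_apply] at this
  split_ifs at this <;> norm_num at this <;> simp_all

end Phases

theorem superNonDegPhases_of_forall {d : ℕ} {θ : Fin d → ℝ}
    (h : ∀ c d' e f : Fin d, c ≠ d' → e ≠ f → c ≠ f → d' ≠ e → ∀ a b, ∀ k : ℤ,
      phaseCombination c d' e f a b θ ≠ 2 * Real.pi * k) :
    SuperNonDegPhases θ := by
  intro c d' e f hcd hef hcf hde a b heq
  rw [← exp_add] at heq
  obtain ⟨k, hk⟩ := exp_eq_exp_iff_exists_int.1 heq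
  refine h c d' e f hcd hef hcf hde a b k ?_
  apply_fun im at hk
  simp only [ofReal_sub, add_im, mul_im, sub_re, ofReal_re, I_im, mul_one, sub_im, ofReal_im,
    sub_self, I_re, mul_zero, add_zero, intCast_re, mul_re, re_ofNat, im_ofNat, sub_zero, zero_mul,
    intCast_im] at hk
  rw [phaseCombination_apply]
  linarith

theorem volume_setOf_not_superNonDegPhases (d : ℕ) :
    volume {θ : Fin d → ℝ | ¬ SuperNonDegPhases θ} = 0 := by
  let resonances := ⋃ (c : Fin d) (d' : Fin d) (e : Fin d) (f : Fin d) (a : Fin d) (b : Fin d)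
    (_ : c ≠ d' ∧ e ≠ f ∧ c ≠ f ∧ d' ≠ e),
    phaseCombination c d' e f a b ⁻¹' Set.range fun k : ℤ ↦ 2 * Real.pi * k
  have hsub : {θ : Fin d → ℝ | ¬ SuperNonDegPhases θ} ⊆ resonances := by
    intro θ hθ
    by_contra hres
    simp only [resonances, Set.mem_iUnion, Set.mem_preimage, Set.mem_range, not_exists] at hres
    exact hθ (superNonDegPhases_of_forall fun c d' e f hcd hef hcf hde a b k hk ↦
      hres c d' e f a b ⟨hcd, hef, hcf, hde⟩ k hk.symm)
  refine measure_mono_null hsub ?_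
  simp only [resonances, measure_iUnion_null_iff]
  rintro c d' e f a b ⟨hcd, hef, hcf, hde⟩
  exact addHaar_preimage_linearMap_of_countable volume
    (phaseCombination_ne_zero a b hcd hef hcf hde) (Set.countable_range _)

theorem dense_setOf_superNonDegPhases (d : ℕ) : Dense {θ : Fin d → ℝ | SuperNonDegPhases θ} :=
  Measure.dense_of_ae (μ := volume) (ae_iff.2 (volume_setOf_not_superNonDegPhases d))

theorem super_non_degenerate_dense_general {d : ℕ}
    (u : Matrix (Fin d) (Fin d) ℂ) (hu : u ∈ Matrix.unitaryGroup (Fin d) ℂ)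
    (ε : ℝ) (hε : 0 < ε) :
    ∃ u' ∈ Matrix.unitaryGroup (Fin d) ℂ, IsSuperNonDeg u' ∧ ‖u' - u‖ < ε := by
  obtain ⟨θ, v, hv, rfl⟩ := exists_eq_mul_diagonal_exp_mul_conjTranspose hu
  set conjDiag := fun φ : Fin d → ℝ ↦ v * diagonal (fun a ↦ exp (φ a * I)) * vᴴ
  have hcont : Continuous conjDiag := by fun_prop
  obtain ⟨θ', hθ', hball⟩ := (dense_setOf_superNonDegPhases d).exists_mem_open
    (Metric.isOpen_ball.preimage hcont) ⟨θ, Metric.mem_ball_self hε⟩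
  refine ⟨conjDiag θ', ?_, ⟨θ', v, hv, rfl, hθ'⟩, by simpa [dist_eq_norm] using hball⟩
  exact mul_mem (mul_mem hv (diagonal_exp_mem_unitaryGroup θ')) (Unitary.star_mem hv)

/-- Lemma A3: super-non-degenerate unitary matrices are dense in the
unitary group `U(d)`. -/
theorem super_non_degenerate_dense {d : ℕ} (hd : 1 ≤ d)
    (u : Matrix (Fin d) (Fin d) ℂ) (hu : u ∈ Matrix.unitaryGroup (Fin d) ℂ)
    (ε : ℝ) (hε : 0 < ε) :
    ∃ u' ∈ Matrix.unitaryGroup (Fin d) ℂ, IsSuperNonDeg u' ∧ ‖u' - u‖ < ε :=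
  super_non_degenerate_dense_general u hu ε hε
end
end

section
/- Let T be an invertible linear map on d×d complex matrices such that for every 𝓤 ∈ 𝕌 there exists 𝓢_𝓤 ∈ 𝕊 (depending on 𝓤) with T⁻¹∘𝓤∘T = 𝓢_𝓤⁻¹∘𝓤∘𝓢_𝓤. Then there exists a single 𝓢 ∈ 𝕊 such that T⁻¹∘𝓤∘T = 𝓢⁻¹∘𝓤∘𝓢 for every 𝓤 ∈ 𝕌. -/
open Matrix

noncomputable section

/-- The set `𝕌` of unitary maps `A ↦ uAu†` on matrices. -/
def UniMapSet (d : ℕ) : Set (Mat d →ₗ[ℂ] Mat d) :=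
  {U | ∃ u ∈ Matrix.unitaryGroup (Fin d) ℂ, ∀ A, U A = u * A * uᴴ}

/-!
Let `D` be the diagonal unitary with eigenvalues `ζ ^ 4 ^ k`, `ζ` a primitive `4 ^ d`-th root of
unity: the matrix units are eigenvectors of `A ↦ D A Dᴴ`, and their eigenvalues are distinct
except that all diagonal ones equal `1`. If `𝓢₀ ∈ 𝕊` is the transformation attached to `D`, then
`T' = T ∘ 𝓢₀⁻¹` commutes with conjugation by `D`, so it preserves these weight spaces, and
`T'⁻¹ ∘ 𝓤 ∘ T' ∈ 𝕌` for every `𝓤 ∈ 𝕌`. The unitary matched with a permutation matrix must be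
monomial with the same permutation, which makes `T'` act on diagonal matrices as
`A ↦ α A + β tr A • 1`; the one matched with the Fourier matrix (no entry vanishes, the first row
is constant) shows that `T'` multiplies the matrix unit `(i, j)`, `i ≠ j`, by `α gᵢ conj gⱼ` with
`|gᵢ| = 1`. Hence `T = α 𝓢 + β tr • 1` with
`𝓢 = Ad (diagonal g) ∘ 𝓢₀ ∈ 𝕊`, and as every `𝓤 ∈ 𝕌` is unital and trace preserving,
`T⁻¹ ∘ 𝓤 ∘ T = 𝓢⁻¹ ∘ 𝓤 ∘ 𝓢`.
-/

section Generalities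

variable {n R : Type*}

lemma mul_mul_mul_eq_of_mul_eq_one {M : Type*} [Monoid M] {v w : M} (h : w * v = 1) (a : M) :
    w * (v * a * w) * v = a := by
  simp only [← mul_assoc, h, one_mul]
  simp only [mul_assoc, h, mul_one]

lemma Matrix.transpose_conjTranspose_comm [Star R] (M : Matrix n n R) : Mᵀᴴ = Mᴴᵀ :=
  (transpose_conjTranspose M).trans (conjTranspose_transpose M).symm

lemma Matrix.permMatrix_apply_eq_ite [DecidableEq n] [Zero R] [One R] (σ : Equiv.Perm n) (k a : n) :
    σ.permMatrix R k a = if σ k = a then 1 else 0 := by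
  simp [PEquiv.toMatrix_apply]

lemma Matrix.transpose_mul_mul_conjTranspose [Fintype n] [CommSemiring R] [StarRing R]
    (v A : Matrix n n R) : (v * A * vᴴ)ᵀ = vᴴᵀ * Aᵀ * vᴴᵀᴴ := by
  simp [transpose_mul, Matrix.mul_assoc, transpose_conjTranspose_comm]

variable [Fintype n] [DecidableEq n]

lemma Matrix.conj_single_one_apply [CommSemiring R] [StarRing R] (v : Matrix n n R)
    (i j k l : n) : (v * (single i j 1 : Matrix n n R) * vᴴ) k l = v k i * star (v l j) := by
  simp [mul_apply, single_apply, ite_and]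

lemma Matrix.conj_diagonal_apply [CommSemiring R] [StarRing R] (v : Matrix n n R) (r : n → R)
    (k l : n) : (v * diagonal r * vᴴ) k l = ∑ a, r a * (v k a * star (v l a)) := by
  rw [mul_apply]
  exact Finset.sum_congr rfl fun a _ => by rw [mul_diagonal, conjTranspose_apply]; ring

lemma Matrix.diagonal_conj_apply [CommSemiring R] [StarRing R] (g : n → R) (A : Matrix n n R)
    (k l : n) : (diagonal g * A * (diagonal g)ᴴ) k l = g k * A k l * star (g l) := by
  simp [diagonal_conjTranspose, mul_diagonal, diagonal_mul]

lemma Matrix.diagonal_conj_single [CommSemiring R] [StarRing R] (g : n → R) (i j : n) :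
    diagonal g * single i j 1 * (diagonal g)ᴴ = (g i * star (g j)) • single i j 1 := by
  ext k l
  rw [diagonal_conj_apply, smul_apply, single_apply]
  split_ifs with h
  · obtain ⟨rfl, rfl⟩ := h
    simp
  · simp

lemma LinearMap.apply_eq_sum_single_apply [CommSemiring R] (T : Matrix n n R →ₗ[R] Matrix n n R)
    (B : Matrix n n R) (k l : n) :
    T B k l = ∑ i, ∑ j, B i j * T (Matrix.single i j 1) k l := by
  conv_lhs => rw [matrix_eq_sum_single B]
  simp only [map_sum, Matrix.sum_apply]
  refine Finset.sum_congr rfl fun i _ => Finset.sum_congr rfl fun j _ => ?_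
  rw [← mul_one (B i j), ← smul_eq_mul, ← smul_single, map_smul, Matrix.smul_apply, smul_eq_mul,
    smul_eq_mul, mul_one]

variable [CommRing R] [StarRing R] {u v : Matrix n n R}

lemma Matrix.conjTranspose_mul_self_of_mem_unitaryGroup (hu : u ∈ unitaryGroup n R) :
    uᴴ * u = 1 :=
  Unitary.star_mul_self_of_mem hu

lemma Matrix.mul_conjTranspose_self_of_mem_unitaryGroup (hu : u ∈ unitaryGroup n R) :
    u * uᴴ = 1 :=
  Unitary.mul_star_self_of_mem hu

lemma Matrix.conjTranspose_transpose_mem_unitaryGroup (hv : v ∈ unitaryGroup n R) :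
    vᴴᵀ ∈ unitaryGroup n R :=
  transpose_mem_unitaryGroup_iff.mpr (Unitary.star_mem hv)

lemma Matrix.trace_conj_of_mem_unitaryGroup (hv : v ∈ unitaryGroup n R) (A : Matrix n n R) :
    (v * A * vᴴ).trace = A.trace := by
  rw [trace_mul_cycle, conjTranspose_mul_self_of_mem_unitaryGroup hv, Matrix.one_mul]

lemma Matrix.sum_row_mul_star_row_eq_zero (hv : v ∈ unitaryGroup n R) {k l : n} (hkl : k ≠ l) :
    ∑ a, v k a * star (v l a) = 0 := by
  simpa [mul_apply, one_apply_ne hkl] using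
    congrFun (congrFun (mul_conjTranspose_self_of_mem_unitaryGroup hv) k) l

lemma Matrix.sum_col_mul_star_col_eq_zero (hv : v ∈ unitaryGroup n R) {i j : n} (hij : i ≠ j) :
    ∑ a, v a i * star (v a j) = 0 := by
  simpa [mul_apply, one_apply_ne hij.symm, mul_comm] using
    congrFun (congrFun (conjTranspose_mul_self_of_mem_unitaryGroup hv) j) i

lemma Matrix.diagonal_mem_unitaryGroup {g : n → R} (hg : ∀ k, g k * star (g k) = 1) :
    diagonal g ∈ unitaryGroup n R := by
  rw [mem_unitaryGroup_iff, star_eq_conjTranspose, diagonal_conjTranspose, diagonal_mul_diagonal]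
  simp only [Pi.star_apply, hg, diagonal_one]

lemma Matrix.permMatrix_mem_unitaryGroup (σ : Equiv.Perm n) :
    σ.permMatrix R ∈ unitaryGroup n R := by
  rw [mem_unitaryGroup_iff, star_eq_conjTranspose, conjTranspose_permMatrix, ← permMatrix_mul,
    inv_mul_cancel, permMatrix_one]

end Generalities

lemma eq_of_perm_invariant {α β : Type*} [Finite α] {R : α → α → β}
    (hR : ∀ (σ : Equiv.Perm α) k a, R (σ k) (σ a) = R k a) {k a k' a' : α}
    (h : k = a ↔ k' = a') : R k a = R k' a' := by
  classical
  by_cases hka : k = a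
  · obtain rfl := hka
    obtain rfl := h.mp rfl
    simpa using (hR (Equiv.swap k k') k k).symm
  · have inj {x y : α} (hxy : x ≠ y) : Function.Injective ![x, y] := by
      intro p q
      fin_cases p <;> fin_cases q <;> simp [hxy, hxy.symm]
    obtain ⟨σ, hσ⟩ := Equiv.Perm.exists_extending_pair _ _ (inj hka) (inj (hka ∘ h.mpr))
    have hk : σ k = k' := hσ 0
    have ha : σ a = a' := hσ 1
    rw [← hk, ← ha, hR]

lemma four_pow_add_four_pow_lt {a b n : ℕ} (ha : a < n) (hb : b < n) : 4 ^ a + 4 ^ b < 4 ^ n := by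
  obtain ⟨m, rfl⟩ : ∃ m, n = m + 1 := ⟨n - 1, by omega⟩
  have ha' : 4 ^ a ≤ 4 ^ m := Nat.pow_le_pow_right (by norm_num) (by omega)
  have hb' : 4 ^ b ≤ 4 ^ m := Nat.pow_le_pow_right (by norm_num) (by omega)
  have : 0 < 4 ^ m := by positivity
  rw [pow_succ]
  linarith

lemma eq_and_eq_of_four_pow_add_eq {a b c e : ℕ} (hab : a ≤ b) (hce : c ≤ e)
    (h : 4 ^ a + 4 ^ b = 4 ^ c + 4 ^ e) : a = c ∧ b = e := by
  obtain rfl : b = e := by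
    by_contra hbe
    rcases Nat.lt_or_gt_of_ne hbe with hbe | hbe
    · linarith [four_pow_add_four_pow_lt (hab.trans_lt hbe) hbe, Nat.zero_le (4 ^ c)]
    · linarith [four_pow_add_four_pow_lt (hce.trans_lt hbe) hbe, Nat.zero_le (4 ^ a)]
  exact ⟨Nat.pow_right_injective (le_refl _) (by simpa using h), rfl⟩

lemma four_pow_add_four_pow_inj {a b c e : ℕ} (h : 4 ^ a + 4 ^ b = 4 ^ c + 4 ^ e) :
    (a = c ∧ b = e) ∨ (a = e ∧ b = c) := by
  rcases le_total a b with hab | hab <;> rcases le_total c e with hce | hce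
  · exact .inl (eq_and_eq_of_four_pow_add_eq hab hce h)
  · exact .inr (eq_and_eq_of_four_pow_add_eq hab hce (by linarith))
  · exact .inr (eq_and_eq_of_four_pow_add_eq hab hce (by linarith)).symm
  · exact .inl (eq_and_eq_of_four_pow_add_eq hab hce (by linarith)).symm

lemma IsPrimitiveRoot.mul_star_self {ζ : ℂ} {n : ℕ} (hζ : IsPrimitiveRoot ζ n) (hn : n ≠ 0) :
    ζ * star ζ = 1 := by
  rw [Complex.star_def, Complex.mul_conj', hζ.norm'_eq_one hn]
  norm_num

section SingleSymmetry

variable {d : ℕ}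

lemma exists_generic_phases : ∃ z : Fin d → ℂ, (∀ k, z k * star (z k) = 1) ∧
    ∀ i j k l, z k * star (z l) = z i * star (z j) → (i = j ∧ k = l) ∨ (i = k ∧ j = l) := by
  set ζ := Complex.exp (2 * Real.pi * Complex.I / (4 ^ d : ℕ))
  have hζ : IsPrimitiveRoot ζ (4 ^ d) := Complex.isPrimitiveRoot_exp _ (by positivity)
  have hζ1 := hζ.mul_star_self (by positivity)
  have hunit (k : Fin d) : ζ ^ 4 ^ (k : ℕ) * star (ζ ^ 4 ^ (k : ℕ)) = 1 := by
    rw [star_pow, ← mul_pow, hζ1, one_pow]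
  refine ⟨fun k => ζ ^ 4 ^ (k : ℕ), hunit, fun i j k l h => ?_⟩
  have hprod : ζ ^ (4 ^ (k : ℕ) + 4 ^ (j : ℕ)) = ζ ^ (4 ^ (i : ℕ) + 4 ^ (l : ℕ)) := by
    simp only [pow_add]
    linear_combination (ζ ^ 4 ^ (l : ℕ) * ζ ^ 4 ^ (j : ℕ)) * h
      - (ζ ^ 4 ^ (k : ℕ) * ζ ^ 4 ^ (j : ℕ)) * hunit l
      + (ζ ^ 4 ^ (i : ℕ) * ζ ^ 4 ^ (l : ℕ)) * hunit j
  have hexp := hζ.pow_inj (four_pow_add_four_pow_lt k.2 j.2)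
    (four_pow_add_four_pow_lt i.2 l.2) hprod
  rcases four_pow_add_four_pow_inj hexp with ⟨hki, hjl⟩ | ⟨hkl, hji⟩
  · exact .inr ⟨Fin.ext hki.symm, Fin.ext hjl⟩
  · exact .inl ⟨Fin.ext hji.symm, Fin.ext hkl⟩

lemma exists_unitary_ne_zero_const_row [NeZero d] :
    ∃ F ∈ unitaryGroup (Fin d) ℂ, (∀ k a, F k a ≠ 0) ∧ ∃ c, ∀ a, F 0 a = c := by
  set ζ := Complex.exp (2 * Real.pi * Complex.I / d)
  have hζ : IsPrimitiveRoot ζ d := Complex.isPrimitiveRoot_exp d (NeZero.ne d)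
  have hζ1 := hζ.mul_star_self (NeZero.ne d)
  set s : ℂ := ((Real.sqrt d : ℝ) : ℂ)⁻¹
  have hs0 : s ≠ 0 := by simp [s, NeZero.ne d]
  have hs : s * star s * d = 1 := by
    have hd : ((Real.sqrt d : ℝ) : ℂ) * (Real.sqrt d : ℝ) = d := by
      rw [← Complex.ofReal_mul, Real.mul_self_sqrt (Nat.cast_nonneg d), Complex.ofReal_natCast]
    simp only [s, star_inv₀, Complex.star_def, Complex.conj_ofReal, ← mul_inv, hd]
    exact inv_mul_cancel₀ (Nat.cast_ne_zero.mpr (NeZero.ne d))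
  set F : Mat d := of fun k a => s * ζ ^ ((k : ℕ) * a)
  have hF (k a : Fin d) : F k a = s * ζ ^ ((k : ℕ) * a) := rfl
  refine ⟨F, ?_, fun k a => ?_, s, fun a => by simp [hF]⟩
  · rw [mem_unitaryGroup_iff]
    ext k l
    set x := ζ ^ (k : ℕ) * star (ζ ^ (l : ℕ)) with hx_def
    have hterm (a : Fin d) : F k a * star F a l = s * star s * x ^ (a : ℕ) := by
      simp only [star_eq_conjTranspose, conjTranspose_apply, hF, star_mul', star_pow, x,
        mul_pow, pow_mul]
      ring
    rw [mul_apply, Finset.sum_congr rfl fun a _ => hterm a, ← Finset.mul_sum,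
      Fin.sum_univ_eq_sum_range (fun a => x ^ a) d, one_apply]
    split_ifs with hkl
    · rw [show x = 1 by rw [hx_def, hkl, star_pow, ← mul_pow, hζ1, one_pow]]
      simpa using hs
    · have hx : x ≠ 1 := by
        intro h
        refine hkl (Fin.ext (hζ.pow_inj k.2 l.2 ?_))
        calc ζ ^ (k : ℕ) = x * ζ ^ (l : ℕ) := by
              rw [hx_def, mul_assoc, star_pow, ← mul_pow, mul_comm (star ζ), hζ1, one_pow, mul_one]
          _ = ζ ^ (l : ℕ) := by rw [h, one_mul]
      have hxd : x ^ d = 1 := by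
        rw [hx_def, mul_pow, ← pow_mul, ← star_pow, ← pow_mul, mul_comm (k : ℕ), mul_comm (l : ℕ),
          pow_mul, pow_mul, hζ.pow_eq_one, one_pow, one_pow, star_one, mul_one]
      rw [geom_sum_eq hx, hxd, sub_self, zero_div, mul_zero]
  · rw [hF]
    exact mul_ne_zero hs0 (pow_ne_zero _ (hζ.ne_zero (NeZero.ne d)))

variable {u v : Mat d}

lemma Sinv_eq_Sfwd (u : Mat d) (b : Bool) : Sinv u b = Sfwd (if b then uᵀ else uᴴ) b := by
  funext A
  cases b <;> simp [Sinv, Sfwd, transpose_mul, Matrix.mul_assoc, transpose_conjTranspose_comm]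

lemma Sinv_Sfwd (hu : u ∈ unitaryGroup (Fin d) ℂ) (b : Bool) (A : Mat d) :
    Sinv u b (Sfwd u b A) = A := by
  cases b <;> simp [Sinv, Sfwd,
    mul_mul_mul_eq_of_mul_eq_one (conjTranspose_mul_self_of_mem_unitaryGroup hu)]

lemma Sfwd_Sinv (hu : u ∈ unitaryGroup (Fin d) ℂ) (b : Bool) (A : Mat d) :
    Sfwd u b (Sinv u b A) = A := by
  cases b <;> simp [Sinv, Sfwd,
    mul_mul_mul_eq_of_mul_eq_one (mul_conjTranspose_self_of_mem_unitaryGroup hu)]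

lemma trace_Sfwd (hu : u ∈ unitaryGroup (Fin d) ℂ) (b : Bool) (A : Mat d) :
    (Sfwd u b A).trace = A.trace := by
  cases b <;> simp [Sfwd, trace_conj_of_mem_unitaryGroup hu]

lemma trace_Sinv (hu : u ∈ unitaryGroup (Fin d) ℂ) (b : Bool) (A : Mat d) :
    (Sinv u b A).trace = A.trace := by
  rw [← trace_Sfwd hu b, Sfwd_Sinv hu]

lemma Sfwd_mul (q u : Mat d) (b : Bool) (A : Mat d) :
    Sfwd (q * u) b A = q * Sfwd u b A * qᴴ := by
  cases b <;> simp [Sfwd, conjTranspose_mul, Matrix.mul_assoc]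

lemma exists_Sfwd_conj (hu : u ∈ unitaryGroup (Fin d) ℂ) (b : Bool)
    (hv : v ∈ unitaryGroup (Fin d) ℂ) :
    ∃ w ∈ unitaryGroup (Fin d) ℂ, ∀ A, Sfwd u b (v * A * vᴴ) = w * Sfwd u b A * wᴴ := by
  have conj_conj (x X : Mat d) :
      u * (x * X * xᴴ) * uᴴ = (u * x * uᴴ) * (u * X * uᴴ) * (u * x * uᴴ)ᴴ := by
    simp only [conjTranspose_mul, conjTranspose_conjTranspose, Matrix.mul_assoc,
      ← Matrix.mul_assoc uᴴ u, conjTranspose_mul_self_of_mem_unitaryGroup hu, Matrix.one_mul]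
  have hu' := Unitary.star_mem hu
  cases b
  · exact ⟨u * v * uᴴ, mul_mem (mul_mem hu hv) hu', fun A => conj_conj v A⟩
  · exact ⟨u * vᴴᵀ * uᴴ, mul_mem (mul_mem hu (conjTranspose_transpose_mem_unitaryGroup hv)) hu',
      fun A => by simp only [Sfwd, if_true, transpose_mul_mul_conjTranspose, conj_conj]⟩

lemma exists_Sinv_conj (hu : u ∈ unitaryGroup (Fin d) ℂ) (b : Bool)
    (hv : v ∈ unitaryGroup (Fin d) ℂ) :
    ∃ w ∈ unitaryGroup (Fin d) ℂ, ∀ A, Sinv u b (v * A * vᴴ) = w * Sinv u b A * wᴴ := by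
  rw [Sinv_eq_Sfwd]
  refine exists_Sfwd_conj ?_ b hv
  cases b
  · exact Unitary.star_mem hu
  · exact transpose_mem_unitaryGroup_iff.mpr hu

def sfwdEquiv (hu : u ∈ unitaryGroup (Fin d) ℂ) (b : Bool) : Mat d ≃ₗ[ℂ] Mat d where
  toFun := Sfwd u b
  invFun := Sinv u b
  map_add' A B := by cases b <;> simp [Sfwd, Matrix.mul_add, Matrix.add_mul]
  map_smul' c A := by cases b <;> simp [Sfwd]
  left_inv := Sinv_Sfwd hu b
  right_inv := Sfwd_Sinv hu b

def Intertwines (T : Mat d →ₗ[ℂ] Mat d) (v m : Mat d) : Prop :=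
  ∀ A, v * T A * vᴴ = T (m * A * mᴴ)

/-- `T⁻¹ ∘ 𝓤 ∘ T ∈ 𝕌` for every `𝓤 ∈ 𝕌`, phrased without inverting `T`. -/
def UnitarilyCovariant (T : Mat d →ₗ[ℂ] Mat d) : Prop :=
  ∀ v ∈ unitaryGroup (Fin d) ℂ, ∃ m ∈ unitaryGroup (Fin d) ℂ, Intertwines T v m

lemma UnitarilyCovariant.comp {T S : Mat d →ₗ[ℂ] Mat d} (hT : UnitarilyCovariant T)
    (hS : UnitarilyCovariant S) : UnitarilyCovariant (T ∘ₗ S) := by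
  intro v hv
  obtain ⟨m, hm, hTm⟩ := hT v hv
  obtain ⟨m', hm', hSm'⟩ := hS m hm
  exact ⟨m', hm', fun A => (hTm (S A)).trans (congrArg T (hSm' A))⟩

lemma unitarilyCovariant_sfwdEquiv_symm (hu : u ∈ unitaryGroup (Fin d) ℂ) (b : Bool) :
    UnitarilyCovariant (sfwdEquiv hu b).symm.toLinearMap := by
  intro v hv
  obtain ⟨w, hw, hSw⟩ := exists_Sfwd_conj hu b hv
  refine ⟨w, hw, fun A => ?_⟩
  calc v * Sinv u b A * vᴴ = Sinv u b (Sfwd u b (v * Sinv u b A * vᴴ)) := (Sinv_Sfwd hu b _).symm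
    _ = Sinv u b (w * A * wᴴ) := by rw [hSw, Sfwd_Sinv hu]

lemma unitarilyCovariant_of_forall_symm_conj_eq {T : Mat d ≃ₗ[ℂ] Mat d}
    (h : ∀ v ∈ unitaryGroup (Fin d) ℂ, ∃ u ∈ unitaryGroup (Fin d) ℂ, ∃ b : Bool,
      ∀ A, T.symm (v * T A * vᴴ) = Sinv u b (v * Sfwd u b A * vᴴ)) :
    UnitarilyCovariant T.toLinearMap := by
  intro v hv
  obtain ⟨u, hu, b, hT⟩ := h v hv
  obtain ⟨w, hw, hSw⟩ := exists_Sinv_conj hu b hv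
  refine ⟨w, hw, fun A => ?_⟩
  change v * T A * vᴴ = T (w * A * wᴴ)
  rw [← T.symm_apply_eq, hT, hSw, Sinv_Sfwd hu]

lemma conj_apply_Sinv_eq {T : Mat d ≃ₗ[ℂ] Mat d} (hu : u ∈ unitaryGroup (Fin d) ℂ) {b : Bool}
    (h : ∀ A, T.symm (v * T A * vᴴ) = Sinv u b (v * Sfwd u b A * vᴴ)) (A : Mat d) :
    v * T (Sinv u b A) * vᴴ = T (Sinv u b (v * A * vᴴ)) := by
  rw [← T.symm_apply_eq, h, Sfwd_Sinv hu]

lemma eq_smul_Sfwd_add_trace {T : Mat d → Mat d} (hu : u ∈ unitaryGroup (Fin d) ℂ) {b : Bool}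
    {q : Mat d} {α β : ℂ} (hT : ∀ A, T (Sinv u b A) = α • (q * A * qᴴ) + (β * A.trace) • 1)
    (A : Mat d) : T A = α • Sfwd (q * u) b A + (β * A.trace) • 1 := by
  rw [← Sinv_Sfwd hu b A, hT, trace_Sfwd hu, Sfwd_mul, Sinv_Sfwd hu]

lemma symm_conj_eq_of_forall_eq_smul_Sfwd_add_trace {T : Mat d ≃ₗ[ℂ] Mat d}
    (hu : u ∈ unitaryGroup (Fin d) ℂ) {b : Bool} {α β : ℂ}
    (hT : ∀ A, T A = α • Sfwd u b A + (β * A.trace) • 1) (hv : v ∈ unitaryGroup (Fin d) ℂ)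
    (A : Mat d) : T.symm (v * T A * vᴴ) = Sinv u b (v * Sfwd u b A * vᴴ) := by
  rw [T.symm_apply_eq, hT (Sinv u b _), Sfwd_Sinv hu, trace_Sinv hu,
    trace_conj_of_mem_unitaryGroup hv, trace_Sfwd hu, hT A]
  simp [Matrix.mul_add, Matrix.add_mul, mul_conjTranspose_self_of_mem_unitaryGroup hv]

/-- The weight spaces of conjugation by the diagonal unitaries are the lines through the
off-diagonal matrix units and the space of diagonal matrices. -/
def PreservesWeightSpaces (T : Mat d →ₗ[ℂ] Mat d) : Prop :=
  ∀ i j k l, T (single i j 1) k l ≠ 0 → (i = j ∧ k = l) ∨ (i = k ∧ j = l)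

lemma preservesWeightSpaces_of_commute {T : Mat d →ₗ[ℂ] Mat d} {z : Fin d → ℂ}
    (hz : ∀ i j k l, z k * star (z l) = z i * star (z j) → (i = j ∧ k = l) ∨ (i = k ∧ j = l))
    (hT : ∀ A, diagonal z * T A * (diagonal z)ᴴ = T (diagonal z * A * (diagonal z)ᴴ)) :
    PreservesWeightSpaces T := by
  intro i j k l hne
  apply hz
  have h := congrFun (congrFun (hT (single i j 1)) k) l
  rw [diagonal_conj_apply, diagonal_conj_single, map_smul, Matrix.smul_apply, smul_eq_mul] at h
  exact mul_right_cancel₀ hne (by linear_combination h)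

namespace PreservesWeightSpaces

variable {T : Mat d →ₗ[ℂ] Mat d} {v m : Mat d} {α β : ℂ}

lemma apply_single_eq_zero (hT : PreservesWeightSpaces T) {i j k l : Fin d}
    (h : ¬((i = j ∧ k = l) ∨ (i = k ∧ j = l))) : T (single i j 1) k l = 0 :=
  not_imp_comm.mp (hT i j k l) h

lemma apply_of_ne (hT : PreservesWeightSpaces T) (B : Mat d) {k l : Fin d} (hkl : k ≠ l) :
    T B k l = T (single k l 1) k l * B k l := by
  rw [T.apply_eq_sum_single_apply, Fintype.sum_eq_single k, Fintype.sum_eq_single l, mul_comm]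
  · intro j hj
    rw [hT.apply_single_eq_zero (by grind), mul_zero]
  · intro i hi
    exact Finset.sum_eq_zero fun j _ => by rw [hT.apply_single_eq_zero (by grind), mul_zero]

lemma apply_self (hT : PreservesWeightSpaces T) (B : Mat d) (k : Fin d) :
    T B k k = ∑ a, T (single a a 1) k k * B a a := by
  rw [T.apply_eq_sum_single_apply]
  refine Finset.sum_congr rfl fun i _ => ?_
  rw [Fintype.sum_eq_single i, mul_comm]
  intro j hj
  rw [hT.apply_single_eq_zero (by grind), mul_zero]

lemma map_single_of_ne (hT : PreservesWeightSpaces T) {i j : Fin d} (hij : i ≠ j) :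
    T (single i j 1) = T (single i j 1) i j • single i j 1 := by
  ext k l
  by_cases h : i = k ∧ j = l
  · obtain ⟨rfl, rfl⟩ := h
    simp
  · simp [hT.apply_single_eq_zero (show ¬((i = j ∧ k = l) ∨ (i = k ∧ j = l)) by tauto), h]

lemma map_single_self (hT : PreservesWeightSpaces T) (j : Fin d) :
    T (single j j 1) = diagonal fun k => T (single j j 1) k k := by
  ext k l
  by_cases hkl : k = l
  · rw [hkl, diagonal_apply_eq]
  · rw [hT.apply_single_eq_zero (by grind), diagonal_apply_ne _ hkl]

lemma apply_single_apply_ne_zero (hT : PreservesWeightSpaces T) (hinj : Function.Injective T)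
    {i j : Fin d} (hij : i ≠ j) : T (single i j 1) i j ≠ 0 := by
  intro h
  have h0 : single i j (1 : ℂ) = 0 :=
    hinj (by rw [hT.map_single_of_ne hij, h, zero_smul, map_zero])
  simpa using congrFun (congrFun h0 i) j

lemma intertwines_single_ne_apply_ne (hT : PreservesWeightSpaces T) (hvm : Intertwines T v m)
    {i j k l : Fin d} (hij : i ≠ j) (hkl : k ≠ l) :
    T (single i j 1) i j * (v k i * star (v l j))
      = T (single k l 1) k l * (m k i * star (m l j)) := by
  have h := congrFun (congrFun (hvm (single i j 1)) k) l
  rwa [hT.map_single_of_ne hij, Matrix.mul_smul, Matrix.smul_mul, Matrix.smul_apply, smul_eq_mul,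
    conj_single_one_apply, hT.apply_of_ne _ hkl, conj_single_one_apply] at h

lemma intertwines_single_ne_apply_self (hT : PreservesWeightSpaces T) (hvm : Intertwines T v m)
    {i j : Fin d} (hij : i ≠ j) (k : Fin d) :
    T (single i j 1) i j * (v k i * star (v k j))
      = ∑ a, T (single a a 1) k k * (m a i * star (m a j)) := by
  have h := congrFun (congrFun (hvm (single i j 1)) k) k
  rw [hT.map_single_of_ne hij, Matrix.mul_smul, Matrix.smul_mul, Matrix.smul_apply, smul_eq_mul,
    conj_single_one_apply, hT.apply_self] at h
  simpa only [conj_single_one_apply] using h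

lemma intertwines_single_self_apply_ne (hT : PreservesWeightSpaces T) (hvm : Intertwines T v m)
    (j : Fin d) {k l : Fin d} (hkl : k ≠ l) :
    ∑ a, T (single j j 1) a a * (v k a * star (v l a))
      = T (single k l 1) k l * (m k j * star (m l j)) := by
  have h := congrFun (congrFun (hvm (single j j 1)) k) l
  rwa [hT.map_single_self, conj_diagonal_apply, hT.apply_of_ne _ hkl, conj_single_one_apply] at h

lemma intertwines_single_self_apply_self (hT : PreservesWeightSpaces T) (hvm : Intertwines T v m)
    (j k : Fin d) :
    ∑ a, T (single j j 1) a a * (v k a * star (v k a))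
      = ∑ a, T (single a a 1) k k * (m a j * star (m a j)) := by
  have h := congrFun (congrFun (hvm (single j j 1)) k) k
  rw [hT.map_single_self j, conj_diagonal_apply, hT.apply_self] at h
  simpa only [conj_single_one_apply] using h

lemma intertwines_permMatrix_apply_eq_zero [Nontrivial (Fin d)] (hT : PreservesWeightSpaces T)
    (hinj : Function.Injective T) {σ : Equiv.Perm (Fin d)}
    (hσm : Intertwines T (σ.permMatrix ℂ) m) {k i : Fin d} (hki : σ k ≠ i) : m k i = 0 := by
  have hcol {k l : Fin d} (hkl : k ≠ l) : m k i * star (m l i) = 0 := by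
    have h := hT.intertwines_single_self_apply_ne hσm i hkl
    rw [Finset.sum_eq_zero fun a _ => by
      by_cases hka : σ k = a
      · simp [hka ▸ σ.injective.ne hkl.symm]
      · simp [hka]] at h
    exact (mul_eq_zero.mp h.symm).resolve_left (hT.apply_single_apply_ne_zero hinj hkl)
  have hdiag : m (σ.symm i) i ≠ 0 := by
    obtain ⟨j, hji⟩ := exists_ne i
    have h := hT.intertwines_single_ne_apply_ne hσm hji.symm (σ.symm.injective.ne hji.symm)
    simp only [permMatrix_apply_eq_ite, Equiv.apply_symm_apply, if_true, star_one, mul_one] at h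
    intro h0
    rw [h0, zero_mul, mul_zero] at h
    exact hT.apply_single_apply_ne_zero hinj hji.symm h
  have hk : k ≠ σ.symm i := fun h => hki (by rw [h, Equiv.apply_symm_apply])
  exact (mul_eq_zero.mp (hcol hk)).resolve_right (star_ne_zero.mpr hdiag)

lemma apply_single_self_perm [Nontrivial (Fin d)] (hT : PreservesWeightSpaces T)
    (hinj : Function.Injective T) (hcov : UnitarilyCovariant T) (σ : Equiv.Perm (Fin d))
    (k a : Fin d) : T (single (σ a) (σ a) 1) (σ k) (σ k) = T (single a a 1) k k := by
  obtain ⟨m, hm, hσm⟩ := hcov _ (permMatrix_mem_unitaryGroup σ)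
  have hsupp {b : Fin d} (hb : b ≠ a) : m b (σ a) = 0 :=
    hT.intertwines_permMatrix_apply_eq_zero hinj hσm (σ.injective.ne hb)
  have hnorm : m a (σ a) * star (m a (σ a)) = 1 := by
    have h := congrFun (congrFun (conjTranspose_mul_self_of_mem_unitaryGroup hm) (σ a)) (σ a)
    rwa [mul_apply, Fintype.sum_eq_single a fun b hb => by simp [hsupp hb], one_apply_eq,
      conjTranspose_apply, mul_comm] at h
  have h := hT.intertwines_single_self_apply_self hσm (σ a) k
  rw [Fintype.sum_eq_single (σ k) fun b hb => by simp [Ne.symm hb],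
    Fintype.sum_eq_single a fun b hb => by simp [hsupp hb], hnorm] at h
  simpa [permMatrix_apply_eq_ite] using h

lemma exists_apply_single_self_eq_ite [Nontrivial (Fin d)] (hT : PreservesWeightSpaces T)
    (hinj : Function.Injective T) (hcov : UnitarilyCovariant T) :
    ∃ α β : ℂ, ∀ k a, T (single a a 1) k k = if k = a then α + β else β := by
  obtain ⟨i₀, i₁, h01⟩ := exists_pair_ne (Fin d)
  have hR {k a k' a' : Fin d} (h : k = a ↔ k' = a') :
      T (single a a 1) k k = T (single a' a' 1) k' k' :=
    eq_of_perm_invariant (R := fun k a => T (single a a 1) k k)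
      (hT.apply_single_self_perm hinj hcov) h
  refine ⟨T (single i₀ i₀ 1) i₀ i₀ - T (single i₁ i₁ 1) i₀ i₀, T (single i₁ i₁ 1) i₀ i₀,
    fun k a => ?_⟩
  split_ifs with hka
  · rw [hR (k' := i₀) (a' := i₀) (by simp [hka])]
    ring
  · exact hR (by simp [hka, h01])

lemma sum_apply_single_self_row (hR : ∀ k a, T (single a a 1) k k = if k = a then α + β else β)
    (k : Fin d) (x : Fin d → ℂ) :
    ∑ a, T (single a a 1) k k * x a = α * x k + β * ∑ a, x a := by
  rw [Finset.mul_sum, ← Fintype.sum_ite_eq k (fun a => α * x a), ← Finset.sum_add_distrib]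
  exact Finset.sum_congr rfl fun a _ => by rw [hR]; split_ifs <;> ring

lemma sum_apply_single_self_col (hR : ∀ k a, T (single a a 1) k k = if k = a then α + β else β)
    (j : Fin d) (x : Fin d → ℂ) :
    ∑ a, T (single j j 1) a a * x a = α * x j + β * ∑ a, x a := by
  rw [Finset.mul_sum, ← Fintype.sum_ite_eq' j (fun a => α * x a), ← Finset.sum_add_distrib]
  exact Finset.sum_congr rfl fun a _ => by rw [hR]; split_ifs <;> ring

lemma exists_apply_single_eq [Nontrivial (Fin d)] (hT : PreservesWeightSpaces T)
    (hinj : Function.Injective T) (hR : ∀ k a, T (single a a 1) k k = if k = a then α + β else β)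
    {F : Mat d} (hF : F ∈ unitaryGroup (Fin d) ℂ) (hm : m ∈ unitaryGroup (Fin d) ℂ)
    (hFm : Intertwines T F m) (hF0 : ∀ k a, F k a ≠ 0) {i₀ : Fin d} {c : ℂ}
    (hc : ∀ a, F i₀ a = c) :
    ∃ g : Fin d → ℂ, (∀ i, g i * star (g i) = 1) ∧
      ∀ i j, i ≠ j → T (single i j 1) i j = α * (g i * star (g j)) := by
  obtain ⟨i₁, h01⟩ := exists_ne i₀
  have hc' : c ≠ 0 := hc i₀ ▸ hF0 i₀ i₀
  have hc0 : c * star c ≠ 0 := mul_ne_zero hc' (star_ne_zero.mpr hc')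
  have row₀ {i j : Fin d} (hij : i ≠ j) :
      T (single i j 1) i j * (c * star c) = α * (m i₀ i * star (m i₀ j)) := by
    have h := hT.intertwines_single_ne_apply_self hFm hij i₀
    rwa [hc, hc, sum_apply_single_self_row hR, sum_col_mul_star_col_eq_zero hm hij, mul_zero,
      add_zero] at h
  have ratio {i j : Fin d} (hij : i ≠ j) : α * m i₀ i = T (single i j 1) i j * m i₀ j := by
    have h₁ := hT.intertwines_single_ne_apply_ne hFm hij h01.symm
    have h₂ := hT.intertwines_single_self_apply_ne hFm j h01.symm
    rw [sum_apply_single_self_col hR, sum_row_mul_star_row_eq_zero hF h01.symm, mul_zero,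
      add_zero, hc] at h₂
    rw [hc] at h₁
    refine mul_right_cancel₀ (mul_ne_zero hc' (star_ne_zero.mpr (hF0 i₁ j))) ?_
    linear_combination (m i₀ i) * h₂ - (m i₀ j) * h₁
  have hnorm (j : Fin d) : m i₀ j * star (m i₀ j) = c * star c := by
    obtain ⟨i, hij⟩ := exists_ne j
    refine mul_left_cancel₀ (hT.apply_single_apply_ne_zero hinj hij) ?_
    linear_combination -(star (m i₀ j)) * ratio hij - row₀ hij
  refine ⟨fun i => m i₀ i / c, fun i => ?_, fun i j hij => ?_⟩
  · rw [star_div₀, div_mul_div_comm, hnorm, div_self hc0]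
  · rw [star_div₀, div_mul_div_comm, ← mul_div_assoc, eq_div_iff hc0, row₀ hij]

lemma eq_smul_diagonal_conj_add_trace (hT : PreservesWeightSpaces T)
    (hR : ∀ k a, T (single a a 1) k k = if k = a then α + β else β) {g : Fin d → ℂ}
    (hg : ∀ i, g i * star (g i) = 1)
    (ht : ∀ i j, i ≠ j → T (single i j 1) i j = α * (g i * star (g j))) (A : Mat d) :
    T A = α • (diagonal g * A * (diagonal g)ᴴ) + (β * A.trace) • 1 := by
  ext k l
  simp only [Matrix.add_apply, Matrix.smul_apply, smul_eq_mul, diagonal_conj_apply]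
  by_cases hkl : k = l
  · subst hkl
    rw [hT.apply_self, sum_apply_single_self_row hR, one_apply_eq, trace]
    simp only [diag_apply]
    linear_combination (-(α * A k k)) * hg k
  · rw [hT.apply_of_ne _ hkl, ht k l hkl, one_apply_ne hkl]
    ring

theorem exists_eq_smul_conj_add_trace (hd : 2 ≤ d) (hT : PreservesWeightSpaces T)
    (hinj : Function.Injective T) (hcov : UnitarilyCovariant T) :
    ∃ q ∈ unitaryGroup (Fin d) ℂ, ∃ α β : ℂ,
      ∀ A, T A = α • (q * A * qᴴ) + (β * A.trace) • 1 := by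
  have : Nontrivial (Fin d) := Fin.nontrivial_iff_two_le.mpr hd
  have : NeZero d := ⟨by omega⟩
  obtain ⟨α, β, hR⟩ := hT.exists_apply_single_self_eq_ite hinj hcov
  obtain ⟨F, hF, hF0, c, hc⟩ := exists_unitary_ne_zero_const_row (d := d)
  obtain ⟨m, hm, hFm⟩ := hcov F hF
  obtain ⟨g, hg, ht⟩ := hT.exists_apply_single_eq hinj hR hF hm hFm hF0 hc
  exact ⟨diagonal g, diagonal_mem_unitaryGroup hg, α, β,
    hT.eq_smul_diagonal_conj_add_trace hR hg ht⟩

end PreservesWeightSpaces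

end SingleSymmetry

/-- Lemma A4: if for every `𝓤 ∈ 𝕌` there is some `𝓢_𝓤 ∈ 𝕊` (depending
on `𝓤`) with `T⁻¹∘𝓤∘T = 𝓢_𝓤⁻¹∘𝓤∘𝓢_𝓤`, then a single `𝓢 ∈ 𝕊` works for all
`𝓤 ∈ 𝕌`. -/
theorem single_symmetry_transformation {d : ℕ} (hd : 2 ≤ d)
    (T : Mat d ≃ₗ[ℂ] Mat d)
    (h : ∀ U ∈ UniMapSet d, ∃ u ∈ Matrix.unitaryGroup (Fin d) ℂ, ∃ anti : Bool,
      ∀ A, T.symm (U (T A)) = Sinv u anti (U (Sfwd u anti A))) :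
    ∃ u ∈ Matrix.unitaryGroup (Fin d) ℂ, ∃ anti : Bool,
      ∀ U ∈ UniMapSet d, ∀ A, T.symm (U (T A)) = Sinv u anti (U (Sfwd u anti A)) := by
  have hconj : ∀ v ∈ unitaryGroup (Fin d) ℂ, ∃ u ∈ unitaryGroup (Fin d) ℂ, ∃ b : Bool,
      ∀ A, T.symm (v * T A * vᴴ) = Sinv u b (v * Sfwd u b A * vᴴ) :=
    fun v hv => h (LinearMap.mulRight ℂ vᴴ ∘ₗ LinearMap.mulLeft ℂ v) ⟨v, hv, fun _ => rfl⟩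
  obtain ⟨z, hz1, hz⟩ := exists_generic_phases (d := d)
  obtain ⟨u₀, hu₀, b₀, h₀⟩ := hconj _ (diagonal_mem_unitaryGroup hz1)
  let S₀ := sfwdEquiv hu₀ b₀
  let T' := T.toLinearMap ∘ₗ S₀.symm.toLinearMap
  have hW : PreservesWeightSpaces T' :=
    preservesWeightSpaces_of_commute hz (conj_apply_Sinv_eq hu₀ h₀)
  have hcov : UnitarilyCovariant T' := (unitarilyCovariant_of_forall_symm_conj_eq hconj).comp
    (unitarilyCovariant_sfwdEquiv_symm hu₀ b₀)
  obtain ⟨q, hq, α, β, hT'⟩ :=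
    hW.exists_eq_smul_conj_add_trace hd (T.injective.comp S₀.symm.injective) hcov
  refine ⟨q * u₀, mul_mem hq hu₀, b₀, ?_⟩
  rintro U ⟨v, hv, hU⟩ A
  simp only [hU]
  exact symm_conj_eq_of_forall_eq_smul_Sfwd_add_trace (mul_mem hq hu₀)
    (eq_smul_Sfwd_add_trace hu₀ hT') hv A
end
end

section
/- Let D be a trace-preserving linear map on d×d complex matrices. Then D commutes with every unitary map, i.e. D(uAu†) = u D(A) u† for every unitary matrix u and every matrix A, if and only if D is a depolarising map, i.e. there exists a scalar F such that D(A) = F·A + (1−F)·(Tr(A)/d)·I for all A. -/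
/-
Covariance under a unitary involution `H` (Hermitian with `H * H = 1`) linearises: conjugation by
the unitary `3/5 + (4/5) i H` sends `A` to `9/25 A + (12/25) i [H, A] + 16/25 H A H`, so `D`
commutes with `[H, ·]`. For `H = 1 - 2 E_tt` this forces `D E_ij` to be a multiple of `E_ij` when
`i ≠ j` and diagonal when `i = j`; conjugation by permutation matrices makes the surviving entries
independent of the indices, and the commutator with the transposition of `i` and `j` ties the
off-diagonal value `F` to the diagonal ones. Hence `D A = F A + β Tr(A) 1`, and trace preservation
gives `β d = 1 - F`.
-/

open Matrix

theorem Equiv.Perm.exists_apply_eq_and_apply_eq {α : Type*} [DecidableEq α] {i j k l : α}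
    (hij : i ≠ j) (hkl : k ≠ l) : ∃ σ : Equiv.Perm α, σ i = k ∧ σ j = l := by
  refine ⟨(Equiv.swap i k).trans (Equiv.swap (Equiv.swap i k j) l), ?_, ?_⟩
  · rw [Equiv.trans_apply, Equiv.swap_apply_left]
    refine Equiv.swap_apply_of_ne_of_ne (fun hk => hij ?_) hkl
    exact (Equiv.swap i k).injective ((Equiv.swap_apply_left i k).trans hk)
  · rw [Equiv.trans_apply, Equiv.swap_apply_left]

namespace Matrix

variable {n R : Type*} [Fintype n] [DecidableEq n] [CommRing R]

lemma mem_unitaryGroup_of_involution [StarRing R] {H : Matrix n n R} (hH : Hᴴ = H)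
    (hH2 : H * H = 1) : H ∈ unitaryGroup n R := by
  rwa [mem_unitaryGroup_iff, star_eq_conjTranspose, hH]

lemma permMatrix_mem_unitaryGroup_s11 [StarRing R] (σ : Equiv.Perm n) :
    σ.permMatrix R ∈ unitaryGroup n R := by
  rw [mem_unitaryGroup_iff, star_eq_conjTranspose, conjTranspose_permMatrix, ← permMatrix_mul,
    inv_mul_cancel, permMatrix_one]

lemma permMatrix_mul_mul_conjTranspose_permMatrix [StarRing R] (σ : Equiv.Perm n)
    (A : Matrix n n R) : σ.permMatrix R * A * (σ.permMatrix R)ᴴ = A.submatrix σ σ := by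
  rw [conjTranspose_permMatrix, PEquiv.toMatrix_toPEquiv_mul, PEquiv.mul_toMatrix_toPEquiv,
    submatrix_submatrix]
  rfl

lemma diagonal_mul_sub_mul_diagonal_apply (v : n → R) (M : Matrix n n R) (k l : n) :
    (diagonal v * M - M * diagonal v) k l = (v k - v l) * M k l := by
  rw [sub_apply, diagonal_mul, mul_diagonal]
  ring

lemma diagonal_mul_single_sub_single_mul_diagonal (v : n → R) (i j : n) (c : R) :
    diagonal v * single i j c - single i j c * diagonal v = (v i - v j) • single i j c := by
  ext k l
  rw [diagonal_mul_sub_mul_diagonal_apply, smul_apply, smul_eq_mul, single_apply]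
  split_ifs with h
  · obtain ⟨rfl, rfl⟩ := h
    rfl
  · simp

end Matrix

variable {n : Type*} [Fintype n] [DecidableEq n]

def IsUnitarilyCovariant (D : Matrix n n ℂ →ₗ[ℂ] Matrix n n ℂ) : Prop :=
  ∀ u ∈ unitaryGroup n ℂ, ∀ A, D (u * A * uᴴ) = u * D A * uᴴ

namespace IsUnitarilyCovariant

variable {D : Matrix n n ℂ →ₗ[ℂ] Matrix n n ℂ}

theorem map_commutator_of_involution (hD : IsUnitarilyCovariant D) {H : Matrix n n ℂ}
    (hH : Hᴴ = H) (hH2 : H * H = 1) (A : Matrix n n ℂ) :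
    D (H * A - A * H) = H * D A - D A * H := by
  set u : Matrix n n ℂ := (3 / 5 : ℂ) • 1 + (4 / 5 * Complex.I) • H
  have hu : uᴴ = (3 / 5 : ℂ) • 1 - (4 / 5 * Complex.I) • H := by
    simp [u, hH, sub_eq_add_neg]
  have hconj : ∀ B, u * B * uᴴ = (9 / 25 : ℂ) • B
      + (12 / 25 * Complex.I) • (H * B - B * H) + (16 / 25 : ℂ) • (H * B * H) := by
    intro B
    simp only [u, hu, add_mul, mul_sub, smul_mul_assoc, mul_smul_comm, one_mul, mul_one,
      smul_sub]
    match_scalars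
    · ring
    · ring
    · ring
    · linear_combination (-16 / 25 : ℂ) * Complex.I_sq
  have hu_mem : u ∈ unitaryGroup n ℂ := by
    rw [mem_unitaryGroup_iff, star_eq_conjTranspose, ← one_mul uᴴ, ← mul_assoc, hconj]
    simp only [mul_one, one_mul, sub_self, smul_zero, add_zero, hH2]
    module
  have hHA := hD H (mem_unitaryGroup_of_involution hH hH2) A
  rw [hH] at hHA
  have key := hD u hu_mem A
  rw [hconj, hconj, map_add, map_add, map_smul, map_smul, map_smul, hHA] at key
  have hc : (12 / 25 * Complex.I) ≠ 0 := by simp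
  exact smul_right_injective _ hc (add_left_cancel (add_right_cancel key))

theorem map_commutator_of_projection (hD : IsUnitarilyCovariant D) {P : Matrix n n ℂ}
    (hP : Pᴴ = P) (hP2 : P * P = P) (A : Matrix n n ℂ) :
    D (P * A - A * P) = P * D A - D A * P := by
  have hH : (1 - (2 : ℂ) • P)ᴴ = 1 - (2 : ℂ) • P := by simp [hP]
  have hH2 : (1 - (2 : ℂ) • P) * (1 - (2 : ℂ) • P) = 1 := by
    simp only [sub_mul, mul_sub, one_mul, mul_one, smul_mul_smul_comm, hP2]
    module
  have key := hD.map_commutator_of_involution hH hH2 A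
  simp only [sub_mul, mul_sub, one_mul, mul_one, smul_mul_assoc, mul_smul_comm] at key
  have hcomm : ∀ X Y Z : Matrix n n ℂ,
      X - (2 : ℂ) • Y - (X - (2 : ℂ) • Z) = (-2 : ℂ) • (Y - Z) := fun X Y Z => by module
  rw [hcomm, hcomm, map_smul] at key
  exact smul_right_injective _ (by norm_num) key

theorem map_submatrix (hD : IsUnitarilyCovariant D) (σ : Equiv.Perm n) (A : Matrix n n ℂ) :
    D (A.submatrix σ σ) = (D A).submatrix σ σ := by
  rw [← permMatrix_mul_mul_conjTranspose_permMatrix,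
    ← permMatrix_mul_mul_conjTranspose_permMatrix]
  exact hD _ (permMatrix_mem_unitaryGroup_s11 σ) A

theorem apply_single_apply_perm (hD : IsUnitarilyCovariant D) (σ : Equiv.Perm n) (i j k l : n) :
    D (single (σ i) (σ j) 1) (σ k) (σ l) = D (single i j 1) k l := by
  simpa using (congr_fun₂ (hD.map_submatrix σ (single (σ i) (σ j) 1)) k l).symm

theorem apply_single_apply_eq_zero (hD : IsUnitarilyCovariant D) {i j k l : n}
    (h : ¬((i = k ∧ j = l) ∨ (i = j ∧ k = l))) : D (single i j 1) k l = 0 := by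
  by_contra hne
  have hweights : ∀ t, (Pi.single i 1 - Pi.single j 1 : n → ℂ) t
      = (Pi.single k 1 - Pi.single l 1 : n → ℂ) t := by
    intro t
    have hP : (single t t (1 : ℂ))ᴴ = single t t 1 := by simp
    have hP2 : single t t (1 : ℂ) * single t t 1 = single t t 1 := by simp
    have key := congr_fun₂ (hD.map_commutator_of_projection hP hP2 (single i j 1)) k l
    rw [← diagonal_single, diagonal_mul_single_sub_single_mul_diagonal, map_smul,
      Matrix.smul_apply, smul_eq_mul, diagonal_mul_sub_mul_diagonal_apply] at key
    simpa only [Pi.sub_apply, Pi.single_comm t] using mul_right_cancel₀ hne key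
  have hsum : (Pi.single i 1 + Pi.single l 1 : n → ℂ) = Pi.single k 1 + Pi.single j 1 := by
    funext t
    linear_combination (norm := skip) hweights t
    simp only [Pi.add_apply, Pi.sub_apply]
    ring
  rcases (Pi.single_add_single_eq_single_add_single one_ne_zero one_ne_zero).1 hsum with
    ⟨hik, hlj⟩ | ⟨-, hij, hlk⟩ | ⟨htwo, -⟩
  · exact h (Or.inl ⟨hik, hlj.symm⟩)
  · exact h (Or.inr ⟨hij, hlk.symm⟩)
  · norm_num at htwo

theorem apply_single_apply_self_of_ne (hD : IsUnitarilyCovariant D) {i j : n} (hij : i ≠ j) :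
    D (single i j 1) i j = D (single j j 1) j j - D (single j j 1) i i := by
  set σ := Equiv.swap i j
  have hH : (σ.permMatrix ℂ)ᴴ = σ.permMatrix ℂ := by
    rw [conjTranspose_permMatrix, Equiv.swap_inv]
  have hH2 : σ.permMatrix ℂ * σ.permMatrix ℂ = 1 := by
    rw [← permMatrix_mul, Equiv.swap_mul_self, permMatrix_one]
  have hcomm : σ.permMatrix ℂ * single j j 1 - single j j 1 * σ.permMatrix ℂ
      = single i j 1 - single j i 1 := by
    rw [PEquiv.toMatrix_toPEquiv_mul, PEquiv.mul_toMatrix_toPEquiv, ← Equiv.coe_refl,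
      submatrix_single_equiv, submatrix_single_equiv]
    simp [σ]
  have key := congr_fun₂ (hD.map_commutator_of_involution hH hH2 (single j j 1)) i j
  rw [hcomm, map_sub, Matrix.sub_apply,
    hD.apply_single_apply_eq_zero (i := j) (j := i) (by simp [hij]), sub_zero,
    PEquiv.toMatrix_toPEquiv_mul, PEquiv.mul_toMatrix_toPEquiv, Matrix.sub_apply] at key
  simpa [σ] using key

theorem apply_single (hD : IsUnitarilyCovariant D) {i₀ j₀ : n} (h : i₀ ≠ j₀) (i j : n) :
    D (single i j 1) = D (single i₀ j₀ 1) i₀ j₀ • single i j 1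
      + (D (single j₀ j₀ 1) i₀ i₀ * (single i j 1).trace) • 1 := by
  have hperm := hD.apply_single_apply_perm
  ext k l
  simp only [Matrix.add_apply, Matrix.smul_apply, smul_eq_mul, single_apply, one_apply]
  by_cases hij : i = j
  · subst hij
    rw [trace_single_eq_same]
    by_cases hkl : k = l
    · subst hkl
      by_cases hik : i = k
      · subst hik
        have hdiag := hperm (Equiv.swap j₀ i) j₀ j₀ j₀ j₀
        rw [Equiv.swap_apply_left] at hdiag
        rw [hdiag, hD.apply_single_apply_self_of_ne h]
        simp
      · obtain ⟨σ, hσj, hσi⟩ := Equiv.Perm.exists_apply_eq_and_apply_eq h.symm hik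
        rw [← hσj, ← hσi, hperm]
        simp [h.symm]
    · have hkl' : ¬(i = k ∧ i = l) := fun h' => hkl (h'.1.symm.trans h'.2)
      rw [hD.apply_single_apply_eq_zero (by simp [hkl, hkl'])]
      simp [hkl, hkl']
  · rw [trace_single_eq_of_ne _ _ _ hij]
    by_cases hkl : i = k ∧ j = l
    · obtain ⟨rfl, rfl⟩ := hkl
      obtain ⟨σ, hσi, hσj⟩ := Equiv.Perm.exists_apply_eq_and_apply_eq h hij
      rw [← hσi, ← hσj, hperm]
      simp
    · rw [hD.apply_single_apply_eq_zero (by tauto)]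
      simp [hkl]

theorem exists_eq_smul_add_trace_smul_one (hD : IsUnitarilyCovariant D) {i₀ j₀ : n}
    (h : i₀ ≠ j₀) : ∃ F β : ℂ, ∀ A, D A = F • A + (β * A.trace) • 1 := by
  obtain ⟨F, β, hsingle⟩ : ∃ F β : ℂ,
      ∀ i j, D (single i j 1) = F • single i j 1 + (β * (single i j 1).trace) • 1 :=
    ⟨_, _, hD.apply_single h⟩
  let G : Matrix n n ℂ →ₗ[ℂ] Matrix n n ℂ :=
    F • LinearMap.id + β • (traceLinearMap n ℂ ℂ).smulRight 1
  have hDG : D = G := ext_linearMap ℂ fun i j => LinearMap.ext_ring <| by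
    simp [G, hsingle, smul_smul]
  refine ⟨F, β, fun A => ?_⟩
  simp [hDG, G, smul_smul]

theorem of_eq_smul_add_trace_smul_one {F β : ℂ}
    (h : ∀ A, D A = F • A + (β * A.trace) • 1) : IsUnitarilyCovariant D := by
  intro u hu A
  have huu : u * uᴴ = 1 := mem_unitaryGroup_iff.mp hu
  have huu' : uᴴ * u = 1 := mem_unitaryGroup_iff'.mp hu
  rw [h, h, trace_mul_cycle, huu', one_mul]
  simp only [mul_add, add_mul, mul_smul_comm, smul_mul_assoc, mul_one, huu]

end IsUnitarilyCovariant

/-- Lemma A6: a trace-preserving linear map on d×d complex matrices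
commutes with every unitary map iff it is a depolarising map
`D_F(A) = F·A + (1−F)·(Tr(A)/d)·I` for some scalar `F`. -/
theorem commutes_with_unitaries_iff_depolarising {d : ℕ} (hd : 2 ≤ d)
    (D : Matrix (Fin d) (Fin d) ℂ →ₗ[ℂ] Matrix (Fin d) (Fin d) ℂ)
    (hTP : ∀ A, (D A).trace = A.trace) :
    (∀ u ∈ Matrix.unitaryGroup (Fin d) ℂ, ∀ A, D (u * A * uᴴ) = u * D A * uᴴ) ↔
    (∃ F : ℂ, ∀ A,
      D A = F • A + ((1 - F) * (A.trace / d)) • (1 : Matrix (Fin d) (Fin d) ℂ)) := by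
  have hd0 : (d : ℂ) ≠ 0 := by norm_cast; omega
  constructor
  · intro hD
    obtain ⟨F, β, hFβ⟩ := IsUnitarilyCovariant.exists_eq_smul_add_trace_smul_one hD
      (i₀ := ⟨0, by omega⟩) (j₀ := ⟨1, by omega⟩) (by simp)
    have hβ : β * d = 1 - F := by
      have htrace := hTP (single ⟨0, by omega⟩ ⟨0, by omega⟩ 1)
      simp only [hFβ, trace_add, trace_smul, trace_single_eq_same, trace_one, Fintype.card_fin,
        smul_eq_mul, mul_one] at htrace
      linear_combination htrace
    refine ⟨F, fun A => ?_⟩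
    rw [hFβ, ← hβ]
    field_simp
  · rintro ⟨F, hF⟩
    refine IsUnitarilyCovariant.of_eq_smul_add_trace_smul_one (F := F) (β := (1 - F) / d)
      fun A => ?_
    rw [hF, div_mul_eq_mul_div, mul_div_assoc]
end

section
/- Let m = ({ρ_i}_{i∈I}, {𝓜_j}_{j∈J}, {E_k}_{k∈K}) and m' = ({ρ'_i}, {𝓜'_j}, {E'_k}) be distribution-equivalent physical representations on d×d complex matrices with the same index types. If m is complete (both {ρ_i} and {E_k} span the space of d×d complex matrices), then m' is complete (both {ρ'_i} and {E'_k} span the space of d×d complex matrices). -/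
open Matrix
open scoped ComplexOrder

noncomputable section

/-! The probabilities of the empty evolution sequence, `p(i, k) = Tr(E_k ρ_i)`, form a matrix that
both representations share. Since the trace form `(X, Y) ↦ Tr(XY)` is nondegenerate and the `E_k`
span, `X ↦ (Tr(E_k X))_k` is injective, so this matrix has rank `d²` when the `ρ_i` span too.
It also factors through the span of the `ρ'_i`, and (symmetrically) through that of the `E'_k`,
whose dimensions are therefore at least `d²`. -/

namespace LinearMap

variable {R V W M K : Type*} [CommRing R] [AddCommGroup V] [AddCommGroup W]
  [AddCommGroup M] [Module R V] [Module R W] [Module R M]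

theorem injective_pi_of_separatingRight {B : V →ₗ[R] W →ₗ[R] M} (hB : B.SeparatingRight)
    {E : K → V} (hE : Submodule.span R (Set.range E) = ⊤) :
    Function.Injective (LinearMap.pi fun k => B (E k)) := by
  rw [← ker_eq_bot, ker_eq_bot']
  intro y hy
  have hflip : B.flip y = 0 := ext_on_range hE fun k => congrFun hy k
  exact hB y fun x => LinearMap.congr_fun hflip x

end LinearMap

theorem Submodule.span_range_eq_top_of_comp_eq {𝕜 V W I : Type*} [Field 𝕜] [AddCommGroup V]
    [AddCommGroup W] [Module 𝕜 V] [Module 𝕜 W] [FiniteDimensional 𝕜 V] {f g : V →ₗ[𝕜] W}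
    (hf : Function.Injective f) {ρ ρ' : I → V} (hρ : span 𝕜 (Set.range ρ) = ⊤)
    (hfg : f ∘ ρ = g ∘ ρ') : span 𝕜 (Set.range ρ') = ⊤ := by
  have hrange : LinearMap.range f = (span 𝕜 (Set.range ρ')).map g := by
    rw [LinearMap.range_eq_map, ← hρ, map_span, map_span, ← Set.range_comp, ← Set.range_comp, hfg]
  refine eq_top_of_finrank_eq (le_antisymm (finrank_le _) ?_)
  calc Module.finrank 𝕜 V = Module.finrank 𝕜 (LinearMap.range f) :=
        (LinearMap.finrank_range_of_inj hf).symm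
    _ ≤ Module.finrank 𝕜 (span 𝕜 (Set.range ρ')) := hrange ▸ finrank_map_le g _

theorem Submodule.span_range_eq_top_of_pairing_eq {𝕜 V W M I K : Type*} [Field 𝕜]
    [AddCommGroup V] [AddCommGroup W] [AddCommGroup M] [Module 𝕜 V] [Module 𝕜 W] [Module 𝕜 M]
    [FiniteDimensional 𝕜 W] {B : V →ₗ[𝕜] W →ₗ[𝕜] M} (hB : B.SeparatingRight)
    {E E' : K → V} {ρ ρ' : I → W} (hE : span 𝕜 (Set.range E) = ⊤)
    (hρ : span 𝕜 (Set.range ρ) = ⊤) (h : ∀ k i, B (E k) (ρ i) = B (E' k) (ρ' i)) :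
    span 𝕜 (Set.range ρ') = ⊤ :=
  span_range_eq_top_of_comp_eq (g := LinearMap.pi fun k => B (E' k))
    (LinearMap.injective_pi_of_separatingRight hB hE) hρ (funext fun i => funext fun k => h k i)

namespace Matrix

variable (n R : Type*) [Fintype n] [DecidableEq n] [CommRing R]

def traceMulForm : Matrix n n R →ₗ[R] Matrix n n R →ₗ[R] R :=
  (LinearMap.mul R (Matrix n n R)).compr₂ (traceLinearMap n R R)

variable {n R}

@[simp]
theorem traceMulForm_apply (A B : Matrix n n R) : traceMulForm n R A B = (A * B).trace := rfl

theorem traceMulForm_nondegenerate : (traceMulForm n R).Nondegenerate :=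
  ⟨fun A hA => ext_iff_trace_mul_right.2 fun B => by simpa using hA B,
    fun B hB => ext_iff_trace_mul_left.2 fun A => by simpa using hB A⟩

end Matrix

theorem completeness_transfers_general {d : ℕ} {I J K : Type}
    (m m' : QRep d I J K)
    (heq : DistEquiv m m')
    (hρ : Submodule.span ℂ (Set.range m.ρ) = ⊤)
    (hE : Submodule.span ℂ (Set.range m.E) = ⊤) :
    Submodule.span ℂ (Set.range m'.ρ) = ⊤ ∧
    Submodule.span ℂ (Set.range m'.E) = ⊤ := by
  have hp : ∀ k i, traceMulForm (Fin d) ℂ (m.E k) (m.ρ i) =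
      traceMulForm (Fin d) ℂ (m'.E k) (m'.ρ i) := fun k i => heq i [] k
  have hB := traceMulForm_nondegenerate (n := Fin d) (R := ℂ)
  exact ⟨Submodule.span_range_eq_top_of_pairing_eq hB.2 hE hρ hp,
    Submodule.span_range_eq_top_of_pairing_eq (LinearMap.flip_separatingRight.2 hB.1) hρ hE
      fun i k => hp k i⟩

/-- of two distribution-equivalent physical representations, if one is
complete (its initial states span the matrix space and so do its measurement
operators), then so is the other. -/
theorem completeness_transfers {d : ℕ} (hd : 2 ≤ d) {I J K : Type}
    (m m' : QRep d I J K) (hm : m.Physical) (hm' : m'.Physical)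
    (heq : DistEquiv m m')
    (hρ : Submodule.span ℂ (Set.range m.ρ) = ⊤)
    (hE : Submodule.span ℂ (Set.range m.E) = ⊤) :
    Submodule.span ℂ (Set.range m'.ρ) = ⊤ ∧
    Submodule.span ℂ (Set.range m'.E) = ⊤ :=
  completeness_transfers_general m m' heq hρ hE
end
end

section
/- Let m = ({ρ_i}_{i∈I}, {𝓜_j}_{j∈J}, {E_k}_{k∈K}) and m' = ({ρ'_i}, {𝓜'_j}, {E'_k}) be distribution-equivalent representations on d×d complex matrices with the same index types, such that the families {ρ_i} and {E_k} are complete. Suppose there is an invertible linear map S on matrices with ρ'_i = S⁻¹(ρ_i) for all i ∈ I and E'_k = S*(E_k) for all k ∈ K, where S* is the dual map for the trace pairing. Then the representations are related by the same transformation: 𝓜'_j = S⁻¹∘𝓜_j∘S for all j ∈ J. -/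
open Matrix
open scoped ComplexOrder

noncomputable section

/-! A square matrix is determined by its trace pairings with a spanning family, and
distribution equivalence on words of length one compares `Tr[E_k 𝓜_j(ρ_i)]`. Moving `S*` across
the trace pairing shows that `S ∘ 𝓜'_j ∘ S⁻¹` and `𝓜_j` agree on every `ρ_i`; completeness of
the states extends this to all matrices. -/

theorem Matrix.eq_of_trace_mul_eq_of_span_eq_top {n ι R : Type*} [Fintype n] [CommRing R]
    {E : ι → Matrix n n R} (hE : Submodule.span R (Set.range E) = ⊤) {X Y : Matrix n n R}
    (h : ∀ k, (E k * X).trace = (E k * Y).trace) : X = Y := by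
  have hpair : traceLinearMap n R R ∘ₗ LinearMap.mulRight R X =
      traceLinearMap n R R ∘ₗ LinearMap.mulRight R Y :=
    LinearMap.ext_on_range hE h
  exact ext_iff_trace_mul_left.2 fun B => LinearMap.congr_fun hpair B

theorem QRep.prob_singleton {d : ℕ} {I J K : Type} (m : QRep d I J K) (i : I) (j : J) (k : K) :
    m.prob i [j] k = (m.E k * m.M j (m.ρ i)).trace :=
  rfl

theorem DistEquiv.conj_evolution_apply_state {d : ℕ} {I J K : Type} {m m' : QRep d I J K}
    (heq : DistEquiv m m') (hE : Submodule.span ℂ (Set.range m.E) = ⊤)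
    {S : Mat d ≃ₗ[ℂ] Mat d} {Sdual : Mat d →ₗ[ℂ] Mat d}
    (hdual : ∀ A B : Mat d, (Sdual A * B).trace = (A * S B).trace)
    (hρ' : ∀ i, m'.ρ i = S.symm (m.ρ i)) (hE' : ∀ k, m'.E k = Sdual (m.E k)) (j : J) (i : I) :
    S (m'.M j (S.symm (m.ρ i))) = m.M j (m.ρ i) := by
  refine eq_of_trace_mul_eq_of_span_eq_top hE fun k => ?_
  rw [← hdual, ← hE', ← hρ', ← QRep.prob_singleton, ← QRep.prob_singleton, heq]

theorem states_measurements_determine_gauge_general {d : ℕ} {I J K : Type}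
    (m m' : QRep d I J K) (heq : DistEquiv m m')
    (hρ : Submodule.span ℂ (Set.range m.ρ) = ⊤)
    (hE : Submodule.span ℂ (Set.range m.E) = ⊤)
    (S : Mat d ≃ₗ[ℂ] Mat d) (Sdual : Mat d →ₗ[ℂ] Mat d)
    (hdual : ∀ A B : Mat d, (Sdual A * B).trace = (A * S B).trace)
    (hρ' : ∀ i, m'.ρ i = S.symm (m.ρ i))
    (hE' : ∀ k, m'.E k = Sdual (m.E k)) :
    ∀ j A, m'.M j A = S.symm (m.M j (S A)) := by
  intro j A
  have hconj : (S : Mat d →ₗ[ℂ] Mat d) ∘ₗ m'.M j ∘ₗ (S.symm : Mat d →ₗ[ℂ] Mat d) = m.M j :=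
    LinearMap.ext_on_range hρ (heq.conj_evolution_apply_state hE hdual hρ' hE' j)
  rw [LinearEquiv.eq_symm_apply]
  simpa using LinearMap.congr_fun hconj (S A)

/-- Lemma A3 of the gate set tomography section: if two
distribution-equivalent representations have complete sets of initial states and
measurement operators related by an invertible transformation `S` (states by `S⁻¹`,
measurements by the dual `S*`), then their evolution maps are related by the same
transformation: `𝓜'_j = S⁻¹∘𝓜_j∘S`. -/
theorem states_measurements_determine_gauge {d : ℕ} (hd : 2 ≤ d) {I J K : Type}
    (m m' : QRep d I J K) (heq : DistEquiv m m')
    (hρ : Submodule.span ℂ (Set.range m.ρ) = ⊤)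
    (hE : Submodule.span ℂ (Set.range m.E) = ⊤)
    (S : Mat d ≃ₗ[ℂ] Mat d) (Sdual : Mat d →ₗ[ℂ] Mat d)
    (hdual : ∀ A B : Mat d, (Sdual A * B).trace = (A * S B).trace)
    (hρ' : ∀ i, m'.ρ i = S.symm (m.ρ i))
    (hE' : ∀ k, m'.E k = Sdual (m.E k)) :
    ∀ j A, m'.M j A = S.symm (m.M j (S A)) :=
  states_measurements_determine_gauge_general m m' heq hρ hE S Sdual hdual hρ' hE'
end
end

section
/- Let ρ be a d×d Hermitian complex matrix with ρ ≠ (Tr(ρ)/d)·I, and let F > 1 be real. Then D_F(ρ) is not related to ρ by any unitary or antiunitary transformation: for every unitary matrix u, D_F(ρ) ≠ uρu† and D_F(ρ) ≠ uρᵀu†. -/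
open Matrix
open scoped ComplexOrder

noncomputable section

/-- The depolarising map `D_F(A) = F·A + (1−F)·(Tr(A)/d)·I`. -/
def DFmap (d : ℕ) (F : ℂ) : Mat d →ₗ[ℂ] Mat d :=
  F • LinearMap.id +
    ((1 - F) / d) • ((Matrix.traceLinearMap (Fin d) ℂ ℂ).smulRight (1 : Mat d))

/-! The traceless part `σ = ρ - (Tr ρ / d)·I` satisfies `D_F(ρ) - (Tr ρ / d)·I = F·σ`, while
conjugating `ρ` or `ρᵀ` by a unitary `u` turns `σ` into `uσu†` or `uσᵀu†`. The quantity
`Tr(σ†σ)` (the squared Hilbert–Schmidt norm) is invariant under both operations, is multiplied by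
`F²` under `σ ↦ F·σ`, and is nonzero because `σ ≠ 0`; hence `F² = 1`, which is impossible for
`F > 1`. -/

namespace Matrix

variable {m n 𝕜 : Type*} [Fintype m] [Fintype n]

section CommRing

variable [CommRing 𝕜] [StarRing 𝕜]

lemma trace_conjTranspose_mul_self_smul (c : 𝕜) (A : Matrix m n 𝕜) :
    ((c • A)ᴴ * (c • A)).trace = star c * c * (Aᴴ * A).trace := by
  rw [conjTranspose_smul, Matrix.smul_mul, Matrix.mul_smul, smul_smul, trace_smul, smul_eq_mul]

lemma trace_conjTranspose_mul_self_transpose (A : Matrix m n 𝕜) :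
    ((Aᵀ)ᴴ * Aᵀ).trace = (Aᴴ * A).trace := by
  rw [conjTranspose_transpose_eq_transpose_conjTranspose, ← transpose_mul, trace_transpose,
    trace_mul_comm]

variable [DecidableEq n] {u : Matrix n n 𝕜}

lemma trace_conjTranspose_mul_self_unitary_conj (hu : u ∈ unitaryGroup n 𝕜) (A : Matrix n n 𝕜) :
    ((u * A * uᴴ)ᴴ * (u * A * uᴴ)).trace = (Aᴴ * A).trace := by
  have huu : uᴴ * u = 1 := mem_unitaryGroup_iff'.mp hu
  calc ((u * A * uᴴ)ᴴ * (u * A * uᴴ)).trace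
      = (u * (Aᴴ * A) * uᴴ).trace := by
        simp only [conjTranspose_mul, conjTranspose_conjTranspose, Matrix.mul_assoc]
        rw [← Matrix.mul_assoc uᴴ u, huu, Matrix.one_mul]
    _ = (Aᴴ * A).trace := by rw [trace_mul_cycle, huu, Matrix.one_mul]

lemma unitary_conj_sub_smul_one (hu : u ∈ unitaryGroup n 𝕜) (A : Matrix n n 𝕜) (c : 𝕜) :
    u * (A - c • 1) * uᴴ = u * A * uᴴ - c • 1 := by
  rw [Matrix.mul_sub, Matrix.sub_mul, Matrix.mul_smul, Matrix.smul_mul, Matrix.mul_one,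
    ← star_eq_conjTranspose, mem_unitaryGroup_iff.mp hu]

end CommRing

lemma complex_smul_ne_of_trace_conjTranspose_mul_self_eq {A X : Matrix m n ℂ} (hA : A ≠ 0)
    {c : ℂ} (hc : ‖c‖ ≠ 1) (hX : (Xᴴ * X).trace = (Aᴴ * A).trace) : c • A ≠ X := by
  rintro rfl
  have hA' : (Aᴴ * A).trace ≠ 0 := mt trace_conjTranspose_mul_self_eq_zero_iff.mp hA
  rw [trace_conjTranspose_mul_self_smul] at hX
  have hcc : star c * c = 1 := mul_right_cancel₀ hA' (by rw [hX, one_mul])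
  rw [Complex.star_def, Complex.conj_mul'] at hcc
  exact hc ((pow_eq_one_iff_of_nonneg (norm_nonneg c) two_ne_zero).mp (by exact_mod_cast hcc))

end Matrix

lemma DFmap_sub_smul_one {d : ℕ} (F : ℂ) (A : Mat d) :
    DFmap d F A - (A.trace / d) • 1 = F • (A - (A.trace / d) • 1) := by
  simp only [DFmap, LinearMap.add_apply, LinearMap.smul_apply, LinearMap.id_apply,
    LinearMap.smulRight_apply, traceLinearMap_apply]
  module

theorem depolarised_not_unitarily_related_general {d : ℕ}
    (ρ : Mat d)
    (hnt : ρ ≠ (ρ.trace / d) • (1 : Mat d))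
    (F : ℝ) (hF : 1 < F) :
    ∀ u ∈ Matrix.unitaryGroup (Fin d) ℂ,
      DFmap d (F : ℂ) ρ ≠ u * ρ * uᴴ ∧ DFmap d (F : ℂ) ρ ≠ u * ρᵀ * uᴴ := by
  intro u hu
  set σ := ρ - (ρ.trace / d) • (1 : Mat d)
  have hσ : σ ≠ 0 := sub_ne_zero.mpr hnt
  have hF' : ‖(F : ℂ)‖ ≠ 1 := by
    rw [Complex.norm_real, Real.norm_of_nonneg (by linarith)]
    exact hF.ne'
  constructor
  · intro h
    refine complex_smul_ne_of_trace_conjTranspose_mul_self_eq hσ hF'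
      (trace_conjTranspose_mul_self_unitary_conj hu σ) ?_
    rw [← DFmap_sub_smul_one, h, unitary_conj_sub_smul_one hu]
  · intro h
    refine complex_smul_ne_of_trace_conjTranspose_mul_self_eq hσ hF'
      ((trace_conjTranspose_mul_self_unitary_conj hu σᵀ).trans
        (trace_conjTranspose_mul_self_transpose σ)) ?_
    rw [← DFmap_sub_smul_one, h, transpose_sub, transpose_smul, transpose_one,
      unitary_conj_sub_smul_one hu]

/-- for a non-trivial Hermitian matrix `ρ` (i.e. `ρ ≠ (Tr(ρ)/d)·I`) and
real `F > 1`, the matrix `D_F(ρ)` is not related to `ρ` by any unitary or antiunitary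
transformation. -/
theorem depolarised_not_unitarily_related {d : ℕ} (hd : 2 ≤ d)
    (ρ : Mat d) (hρ : ρ.IsHermitian)
    (hnt : ρ ≠ (ρ.trace / d) • (1 : Mat d))
    (F : ℝ) (hF : 1 < F) :
    ∀ u ∈ Matrix.unitaryGroup (Fin d) ℂ,
      DFmap d (F : ℂ) ρ ≠ u * ρ * uᴴ ∧ DFmap d (F : ℂ) ρ ≠ u * ρᵀ * uᴴ :=
  depolarised_not_unitarily_related_general ρ hnt F hF
end
end
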